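/- arXiv:1709.00639 — 2 statements merged into one kernel-verified Lean document; each statement's English description precedes it below -/
import Mathlib

section
/- Let p be a prime, A a set, and let f: ℙ(ℚ²) → A be a map induced via a ℤ_(p)-lattice B ⊂ ℚ² from a nonconstant map f̄: ℙ(B/pB) → A. (1) If f̄ is a flag map, i.e., constant on the complement of one point of the projective line ℙ(B/pB), then there are exactly two equivalence classes of f-compatible ℤ_(p)-lattices in ℚ². (2) If f̄ is not a flag map, then every f-compatible ℤ_(p)-lattice in ℚ² is equivalent to B, i.e., there is exactly one equivalence class of f-compatible lattices. -/
/- Common set-up for statements about projective spaces `ℙ(V)`: flag maps,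
   `ℤ_(p)`-lattices and the associated reduction maps to `ℙ(B/pB)`
   (two nonzero vectors are identified by `ρ_B` iff suitable nonzero scalar
   multiples of them lie in `B ∖ pB` and are congruent modulo `pB`). -/

universe u v w

section PreludeB

variable {k : Type u} [Field k] {V : Type v} [AddCommGroup V] [Module k V] {A : Type w}

/-- The projective subspace `ℙ(W) ⊆ ℙ(V)` attached to a submodule `W ⊆ V`. -/
def psub (W : Submodule k V) : Set (Projectivization k V) :=
  {x | ∃ v : V, ∃ h : v ≠ 0, Projectivization.mk k v h = x ∧ v ∈ W}

/-- The projective line of `ℙ(V)` through the classes of two (independent)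
vectors `v`, `w`. -/
def lineP (v w : V) : Set (Projectivization k V) :=
  {x | ∃ a b : k, ∃ h : a • v + b • w ≠ 0, Projectivization.mk k (a • v + b • w) h = x}

/-- `f` is a flag map on the finite-dimensional projective subspace `ℙ(W)`:
there is a chain (flag) of subspaces of `W` such that `f` is constant on each
successive difference. -/
def ChainFlagOn (f : Projectivization k V → A) (W : Submodule k V) : Prop :=
  ∃ c : ℕ → Submodule k V, c 0 = ⊥ ∧ (∃ n, c n = W) ∧ (∀ i, c i ≤ c (i + 1)) ∧
    (∀ i, c i ≤ W) ∧
    ∀ i, ∀ x ∈ psub (c (i + 1)) \ psub (c i), ∀ y ∈ psub (c (i + 1)) \ psub (c i), f x = f y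

/-- A flag map on a projective space over `F_p` (possibly infinite-dimensional):
the restriction to every finite-dimensional projective subspace is a flag map. -/
def FpFlagMap (f : Projectivization k V → A) : Prop :=
  ∀ W : Submodule k V, FiniteDimensional k W → ChainFlagOn f W

end PreludeB

section PreludeBQ

variable {V : Type v} [AddCommGroup V] [Module ℚ V] {A : Type w}

/-- The `ℤ_(p)`-span of a finite set of vectors (coefficients are rationals
with denominator coprime to `p`). -/
def zpSpanV (p : ℕ) (s : Finset V) : Set V :=
  {z | ∃ f : V → ℚ, (∀ t, ¬ (p ∣ (f t).den)) ∧ z = ∑ t ∈ s, f t • t}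

/-- `p·B`. -/
def pSMul (p : ℕ) (B : Set V) : Set V := {z | ∃ b ∈ B, z = (p : ℚ) • b}

/-- `B` is a `ℤ_(p)`-lattice in the `ℚ`-subspace `W`: a finitely generated
`ℤ_(p)`-submodule spanning `W` over `ℚ`. -/
def IsZpLatIn (p : ℕ) (W : Submodule ℚ V) (B : Set V) : Prop :=
  (∃ s : Finset V, B = zpSpanV p s) ∧ Submodule.span ℚ B = W

/-- Two nonzero vectors have the same image under the reduction map
`ρ_B : ℙ(V) → ℙ(B/pB)`. -/
def ZpRelV (p : ℕ) (B : Set V) (x y : V) : Prop :=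
  ∃ x' y' : V, (∃ a : ℚ, a ≠ 0 ∧ x' = a • x) ∧ (∃ b : ℚ, b ≠ 0 ∧ y' = b • y) ∧
    x' ∈ B ∧ x' ∉ pSMul p B ∧ y' ∈ B ∧ y' ∉ pSMul p B ∧ x' - y' ∈ pSMul p B

/-- Equivalence of lattices: `B' = a·B` for some `a ∈ ℚ^×`. -/
def LatEq (B B' : Set V) : Prop := ∃ a : ℚ, a ≠ 0 ∧ B' = (fun t => a • t) '' B

/-- `f`, restricted to `ℙ(W)`, is induced via the lattice `B` (i.e. it factors
through the reduction map `ρ_B`); such lattices are called `f`-compatible. -/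
def InducedOn (f : Projectivization ℚ V → A) (W : Submodule ℚ V) (p : ℕ) (B : Set V) : Prop :=
  ∀ x y : V, ∀ (hx : x ≠ 0) (hy : y ≠ 0), x ∈ W → y ∈ W → ZpRelV p B x y →
    f (Projectivization.mk ℚ x hx) = f (Projectivization.mk ℚ y hy)

/-- Preimage in `V` of the line of `ℙ(B/pB)` through the residue classes of
`q` and `w`. -/
def resLineV (p : ℕ) (B : Set V) (q w : V) : Set V :=
  {z | ∃ a b : ℚ, ¬ (p ∣ a.den) ∧ ¬ (p ∣ b.den) ∧ ∃ y ∈ pSMul p B, z = a • q + b • w + y}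

/-- `f` is induced via `B` from a flag map on the residue projective *line*
`ℙ(B/pB)`, i.e. from a map constant off one point (the class of `q`). -/
def ResFlagLine (f : Projectivization ℚ V → A) (p : ℕ) (B : Set V) : Prop :=
  ∃ q : V, q ∈ B \ pSMul p B ∧
    ∀ x y : V, ∀ (hx : x ≠ 0) (hy : y ≠ 0), ¬ ZpRelV p B x q → ¬ ZpRelV p B y q →
      f (Projectivization.mk ℚ x hx) = f (Projectivization.mk ℚ y hy)

/-- `f` is induced via `B` from a flag map on the residue projective *plane*
`ℙ(B/pB)`: for a flag (point `q̄`) ∈ (line `l̄` through `q̄` and `w̄`), the map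
is constant off `l̄` and constant on `l̄ ∖ {q̄}`. -/
def ResFlagPlane (f : Projectivization ℚ V → A) (p : ℕ) (B : Set V) : Prop :=
  ∃ q w : V, q ∈ B \ pSMul p B ∧ w ∈ B \ pSMul p B ∧ ¬ ZpRelV p B q w ∧
    (∀ x y : V, ∀ (hx : x ≠ 0) (hy : y ≠ 0),
      (∃ a : ℚ, a ≠ 0 ∧ a • x ∈ (B \ pSMul p B) ∧ a • x ∉ resLineV p B q w) →
      (∃ b : ℚ, b ≠ 0 ∧ b • y ∈ (B \ pSMul p B) ∧ b • y ∉ resLineV p B q w) →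
      f (Projectivization.mk ℚ x hx) = f (Projectivization.mk ℚ y hy)) ∧
    (∀ x y : V, ∀ (hx : x ≠ 0) (hy : y ≠ 0),
      (∃ a : ℚ, a ≠ 0 ∧ a • x ∈ resLineV p B q w \ pSMul p B) → ¬ ZpRelV p B x q →
      (∃ b : ℚ, b ≠ 0 ∧ b • y ∈ resLineV p B q w \ pSMul p B) → ¬ ZpRelV p B y q →
      f (Projectivization.mk ℚ x hx) = f (Projectivization.mk ℚ y hy))

/-- `f` is induced via `B` from a *flag map* `f̄ : ℙ(B/pB) → A` (general
dimension): there is a chain of sublattices from `pB` to `B` (i.e. a flag of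
subspaces of `B/pB`) with `f` constant on each successive difference. -/
def ResChainFlagOn (f : Projectivization ℚ V → A) (p : ℕ) (B : Set V) : Prop :=
  ∃ c : ℕ → Set V, c 0 = pSMul p B ∧ (∃ n, c n = B) ∧ (∀ i, c i ⊆ c (i + 1)) ∧
    (∀ i, (∀ x ∈ c i, ∀ y ∈ c i, x + y ∈ c i) ∧
      (∀ q : ℚ, ¬ (p ∣ q.den) → ∀ x ∈ c i, q • x ∈ c i)) ∧
    ∀ i, ∀ x y : V, ∀ (hx : x ≠ 0) (hy : y ≠ 0),
      (∃ a : ℚ, a ≠ 0 ∧ a • x ∈ c (i + 1) \ c i) →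
      (∃ b : ℚ, b ≠ 0 ∧ b • y ∈ c (i + 1) \ c i) →
      f (Projectivization.mk ℚ x hx) = f (Projectivization.mk ℚ y hy)

/-- `f` is a flag map on the finite-dimensional projective subspace
`ℙ(W) ⊆ ℙ(V)` over `ℚ`: either a chain (flag) of subspaces as over any field,
or induced via a `ℤ_(p)`-lattice `B` in `W` from a flag map on `ℙ(B/pB)`. -/
def QFlagOn (f : Projectivization ℚ V → A) (W : Submodule ℚ V) : Prop :=
  ChainFlagOn f W ∨
    ∃ p : ℕ, p.Prime ∧ ∃ B : Set V, IsZpLatIn p W B ∧ ResChainFlagOn f p B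

/-- A flag map on `ℙ(V)` over `ℚ` (possibly infinite-dimensional): the
restriction to every finite-dimensional projective subspace is a flag map. -/
def QFlagMap (f : Projectivization ℚ V → A) : Prop :=
  ∀ W : Submodule ℚ V, FiniteDimensional ℚ W → QFlagOn f W

end PreludeBQ

/-! Write a lattice as `ℤ_(p) u + ℤ_(p) w` for a basis `(u, w)`. Two vectors with coordinates
`(x₁, x₂)` and `(y₁, y₂)` have the same reduction iff
`|x₁ y₂ - x₂ y₁|_p < max |x₁|_p |x₂|_p * max |y₁|_p |y₂|_p`; everything else is norm
bookkeeping with this criterion.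

By the elementary divisor theorem a lattice `B'` is, up to scaling, `ℤ_(p) g + ℤ_(p) d h` for
some basis `(g, h)` of `B` and some `|d|_p ≤ 1`. If `|d|_p = 1` then `B'` is equivalent to `B`.
If `|d|_p < 1`, compatibility with `B'` makes `f̄` constant off the reduction of `g`. A map that is
constant off each of two distinct points of `ℙ(B/pB)` is constant (there is a third point), and if
`|d|_p < p⁻¹` then `B'` also identifies the reduction of `g` with a further point, so `f` is
constant again. What remains is `|d|_p = p⁻¹` with `g` reducing to the flag point; then
`B' ∼ ℤ_(p) g + p ℤ_(p) h = {x ∈ B | x ∈ pB ∨ ρ_B(x) = ρ_B(g)}`, which only depends on the flag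
point, and this lattice is indeed compatible. -/

namespace ZpLattice

variable {p : ℕ}

section padicNorm

variable [Fact p.Prime] {a b : ℚ}

theorem cast_ne_zero_of_prime : (p : ℚ) ≠ 0 := by exact_mod_cast (Fact.out : p.Prime).ne_zero

theorem padicNorm_pos (ha : a ≠ 0) : 0 < padicNorm p a :=
  (padicNorm.nonneg a).lt_of_ne (padicNorm.nonzero ha).symm

theorem padicNorm_le_one_iff_not_dvd_den (a : ℚ) : padicNorm p a ≤ 1 ↔ ¬ p ∣ a.den := by
  have hpos : 0 < padicNorm p a.den := padicNorm_pos (by exact_mod_cast a.den_ne_zero)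
  conv_lhs => rw [← Rat.num_div_den a, padicNorm.div, div_le_one hpos]
  by_cases hp : p ∣ a.den
  · have hnum : ¬ (p : ℤ) ∣ a.num := fun h =>
      (Fact.out : p.Prime).one_lt.ne'
        (Nat.eq_one_of_dvd_coprimes a.reduced (Int.natCast_dvd.mp h) hp)
    rw [(padicNorm.int_eq_one_iff _).mpr hnum]
    simpa [hp] using (padicNorm.nat_lt_one_iff _).mpr hp
  · rw [(padicNorm.nat_eq_one_iff _).mpr hp]
    simpa [hp] using padicNorm.of_int (p := p) a.num

theorem padicNorm_le_inv_of_lt_one (h : padicNorm p a < 1) : padicNorm p a ≤ (p : ℚ)⁻¹ := by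
  rcases eq_or_ne a 0 with rfl | ha
  · simp
  have hp : (1 : ℚ) < p := by exact_mod_cast (Fact.out : p.Prime).one_lt
  rw [padicNorm.eq_zpow_of_nonzero ha] at h ⊢
  rw [← zpow_neg_one]
  have : -padicValRat p a < 0 := by
    by_contra! h'
    exact absurd h (not_lt.mpr (one_le_zpow₀ hp.le h'))
  exact zpow_le_zpow_right₀ hp.le (by omega)

theorem padicNorm_le_inv_mul_of_lt (h : padicNorm p a < padicNorm p b) :
    padicNorm p a ≤ (p : ℚ)⁻¹ * padicNorm p b := by
  have hb : b ≠ 0 := by rintro rfl; simp at h; linarith [padicNorm.nonneg (p := p) a]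
  have := padicNorm_le_inv_of_lt_one (p := p) (a := a / b)
    (by rwa [padicNorm.div, div_lt_one (padicNorm_pos hb)])
  rwa [padicNorm.div, div_le_iff₀ (padicNorm_pos hb)] at this

theorem padicNorm_div_p_le_one_iff (a : ℚ) : padicNorm p (a / p) ≤ 1 ↔ padicNorm p a < 1 := by
  have hp : (1 : ℚ) < p := by exact_mod_cast (Fact.out : p.Prime).one_lt
  rw [padicNorm.div, padicNorm.padicNorm_p_of_prime, div_le_one (by positivity)]
  exact ⟨fun h => h.trans_lt (inv_lt_one_of_one_lt₀ hp), padicNorm_le_inv_of_lt_one⟩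

theorem padicNorm_sub_eq_left_of_lt (h : padicNorm p b < padicNorm p a) :
    padicNorm p (a - b) = padicNorm p a := by
  rw [sub_eq_add_neg, padicNorm.add_eq_max_of_ne (by rw [padicNorm.neg]; exact h.ne'),
    padicNorm.neg, max_eq_left h.le]

theorem exists_padicNorm_mul_max_eq_one (h : a ≠ 0 ∨ b ≠ 0) :
    ∃ c : ℚ, c ≠ 0 ∧ padicNorm p c * max (padicNorm p a) (padicNorm p b) = 1 := by
  wlog hab : padicNorm p b ≤ padicNorm p a generalizing a b
  · simpa [max_comm] using this h.symm (le_of_not_ge hab)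
  have ha : a ≠ 0 := h.elim id fun hb h0 => (padicNorm_pos hb).not_ge (by simpa [h0] using hab)
  exact ⟨a⁻¹, inv_ne_zero ha, by
    rw [max_eq_left hab, ← padicNorm.mul, inv_mul_cancel₀ ha, padicNorm.one]⟩

end padicNorm

variable {V : Type*} [AddCommGroup V] [Module ℚ V] {u w x y z : V}

section reduction

theorem zpRelV_symm {B : Set V} (hB : ∀ b ∈ B, -b ∈ B) (h : ZpRelV p B x y) :
    ZpRelV p B y x := by
  obtain ⟨x', y', hx', hy', hxB, hxp, hyB, hyp, b, hb, hd⟩ := h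
  exact ⟨y', x', hy', hx', hyB, hyp, hxB, hxp, -b, hB b hb, by rw [smul_neg, ← hd, neg_sub]⟩

theorem zpRelV_image_smul {B : Set V} {c : ℚ} (hc : c ≠ 0) (h : ZpRelV p B x y) :
    ZpRelV p ((c • ·) '' B) x y := by
  obtain ⟨-, -, ⟨α, hα, rfl⟩, ⟨β, hβ, rfl⟩, hxB, hxp, hyB, hyp, b, hb, hd⟩ := h
  have hmem : ∀ {v : V}, c • v ∈ pSMul p ((c • ·) '' B) → v ∈ pSMul p B := by
    rintro v ⟨_, ⟨b, hb, rfl⟩, hv⟩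
    exact ⟨b, hb, smul_right_injective V hc (by simp only [hv, smul_comm c])⟩
  refine ⟨c • α • x, c • β • y, ⟨c * α, mul_ne_zero hc hα, (mul_smul _ _ _).symm⟩,
    ⟨c * β, mul_ne_zero hc hβ, (mul_smul _ _ _).symm⟩, ⟨_, hxB, rfl⟩, fun h => hxp (hmem h),
    ⟨_, hyB, rfl⟩, fun h => hyp (hmem h), c • b, ⟨b, hb, rfl⟩, ?_⟩
  rw [← smul_sub, hd, smul_comm]

theorem inducedOn_image_smul {A : Type*} {f : Projectivization ℚ V → A} {B : Set V} {c : ℚ}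
    (hc : c ≠ 0) (h : InducedOn f ⊤ p B) : InducedOn f ⊤ p ((c • ·) '' B) := by
  intro x y hx hy hxW hyW hxy
  refine h x y hx hy hxW hyW ?_
  simpa [Set.image_image, inv_smul_smul₀ hc] using zpRelV_image_smul (inv_ne_zero hc) hxy

end reduction

def pairLat (p : ℕ) (u w : V) : Set V :=
  {x | ∃ a b : ℚ, padicNorm p a ≤ 1 ∧ padicNorm p b ≤ 1 ∧ a • u + b • w = x}

def IsConstOffClass {A : Type*} (f : Projectivization ℚ V → A) (p : ℕ) (B : Set V) (q : V) :
    Prop :=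
  ∀ x y : V, ∀ (hx : x ≠ 0) (hy : y ≠ 0), ¬ ZpRelV p B x q → ¬ ZpRelV p B y q →
    f (Projectivization.mk ℚ x hx) = f (Projectivization.mk ℚ y hy)

section pairLat

theorem pairLat_comm (u w : V) : pairLat p u w = pairLat p w u := by
  ext x
  constructor <;> rintro ⟨a, b, ha, hb, rfl⟩ <;> exact ⟨b, a, hb, ha, add_comm _ _⟩

theorem left_mem_pairLat : u ∈ pairLat p u w := ⟨1, 0, by simp, by simp, by simp⟩

theorem right_mem_pairLat : w ∈ pairLat p u w := ⟨0, 1, by simp, by simp, by simp⟩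

theorem image_smul_pairLat (c : ℚ) (u w : V) :
    (c • ·) '' pairLat p u w = pairLat p (c • u) (c • w) := by
  ext x
  constructor
  · rintro ⟨-, ⟨a, b, ha, hb, rfl⟩, rfl⟩
    exact ⟨a, b, ha, hb, by module⟩
  · rintro ⟨a, b, ha, hb, rfl⟩
    exact ⟨a • u + b • w, ⟨a, b, ha, hb, rfl⟩, by module⟩

theorem linearIndependent_pair_smul_right (hli : LinearIndependent ℚ ![u, w]) {d : ℚ}
    (hd : d ≠ 0) : LinearIndependent ℚ ![u, d • w] := by
  simpa using (LinearIndependent.pair_smul_smul_iff isUnit_one (IsUnit.mk0 d hd)).mpr hli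

theorem coords_eq_of_linearIndependent (hli : LinearIndependent ℚ ![u, w]) {a b c d : ℚ}
    (h : a • u + b • w = c • u + d • w) : a = c ∧ b = d := by
  have := LinearIndependent.pair_iff.mp hli (a - c) (b - d)
    (by linear_combination (norm := module) h)
  exact ⟨sub_eq_zero.mp this.1, sub_eq_zero.mp this.2⟩

theorem mem_pairLat_iff (hli : LinearIndependent ℚ ![u, w]) {a b : ℚ} :
    a • u + b • w ∈ pairLat p u w ↔ padicNorm p a ≤ 1 ∧ padicNorm p b ≤ 1 := by
  refine ⟨fun ⟨c, d, hc, hd, h⟩ => ?_, fun ⟨ha, hb⟩ => ⟨a, b, ha, hb, rfl⟩⟩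
  obtain ⟨rfl, rfl⟩ := coords_eq_of_linearIndependent hli h
  exact ⟨hc, hd⟩

variable [Fact p.Prime]

theorem add_mem_pairLat (hx : x ∈ pairLat p u w) (hy : y ∈ pairLat p u w) :
    x + y ∈ pairLat p u w := by
  obtain ⟨a, b, ha, hb, rfl⟩ := hx
  obtain ⟨c, d, hc, hd, rfl⟩ := hy
  exact ⟨a + c, b + d, padicNorm.nonarchimedean.trans (max_le ha hc),
    padicNorm.nonarchimedean.trans (max_le hb hd), by module⟩

theorem smul_mem_pairLat {c : ℚ} (hc : padicNorm p c ≤ 1) (hx : x ∈ pairLat p u w) :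
    c • x ∈ pairLat p u w := by
  obtain ⟨a, b, ha, hb, rfl⟩ := hx
  refine ⟨c * a, c * b, ?_, ?_, by module⟩ <;> rw [padicNorm.mul] <;>
    exact mul_le_one₀ hc (padicNorm.nonneg _) ‹_›

theorem neg_mem_pairLat (hx : x ∈ pairLat p u w) : -x ∈ pairLat p u w := by
  simpa using smul_mem_pairLat (c := -1) (by simp) hx

theorem zero_mem_pairLat : (0 : V) ∈ pairLat p u w := by
  simpa using smul_mem_pairLat (c := 0) (by simp) (left_mem_pairLat (p := p) (u := u) (w := w))

theorem pairLat_subset {u' w' : V} (hu : u ∈ pairLat p u' w') (hw : w ∈ pairLat p u' w') :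
    pairLat p u w ⊆ pairLat p u' w' := by
  rintro _ ⟨a, b, ha, hb, rfl⟩
  exact add_mem_pairLat (smul_mem_pairLat ha hu) (smul_mem_pairLat hb hw)

theorem pairLat_smul_right {e : ℚ} (he : padicNorm p e = 1) :
    pairLat p u (e • w) = pairLat p u w := by
  have he0 : e ≠ 0 := fun h => by simp [h] at he
  refine (pairLat_subset left_mem_pairLat (smul_mem_pairLat he.le right_mem_pairLat)).antisymm
    (pairLat_subset left_mem_pairLat ?_)
  have := smul_mem_pairLat (c := e⁻¹) (by rw [← one_div, padicNorm.div, padicNorm.one, he, div_one])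
    (right_mem_pairLat (p := p) (u := u) (w := e • w))
  rwa [inv_smul_smul₀ he0] at this

theorem pairLat_add_smul_right {c : ℚ} (hc : padicNorm p c ≤ 1) :
    pairLat p u (c • u + w) = pairLat p u w := by
  refine (pairLat_subset left_mem_pairLat
    (add_mem_pairLat (smul_mem_pairLat hc left_mem_pairLat) right_mem_pairLat)).antisymm
    (pairLat_subset left_mem_pairLat ?_)
  have := add_mem_pairLat (smul_mem_pairLat (c := -c) (by rwa [padicNorm.neg]) left_mem_pairLat)
    (right_mem_pairLat (p := p) (u := u) (w := c • u + w))
  rwa [neg_smul, neg_add_cancel_left] at this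

theorem mem_pSMul_pairLat_iff (hli : LinearIndependent ℚ ![u, w]) {a b : ℚ} :
    a • u + b • w ∈ pSMul p (pairLat p u w) ↔ padicNorm p a < 1 ∧ padicNorm p b < 1 := by
  have hp : (p : ℚ) ≠ 0 := cast_ne_zero_of_prime
  rw [← padicNorm_div_p_le_one_iff, ← padicNorm_div_p_le_one_iff, ← mem_pairLat_iff hli]
  constructor
  · rintro ⟨z, hz, h⟩
    convert hz using 1
    rw [← inv_smul_smul₀ hp z, ← h]
    module
  · intro h
    refine ⟨_, h, ?_⟩
    rw [smul_add, smul_smul, smul_smul, mul_div_cancel₀ _ hp, mul_div_cancel₀ _ hp]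

theorem mem_pairLat_diff_iff (hli : LinearIndependent ℚ ![u, w]) {a b : ℚ} :
    a • u + b • w ∈ pairLat p u w \ pSMul p (pairLat p u w) ↔
      max (padicNorm p a) (padicNorm p b) = 1 := by
  rw [Set.mem_sdiff, mem_pairLat_iff hli, mem_pSMul_pairLat_iff hli]
  grind

theorem left_mem_pairLat_diff (hli : LinearIndependent ℚ ![u, w]) :
    u ∈ pairLat p u w \ pSMul p (pairLat p u w) := by
  simpa using (mem_pairLat_diff_iff hli (p := p) (a := 1) (b := 0)).mpr (by simp)

theorem right_coord_ne_zero {x₁ x₂ : ℚ} (hx : x = x₁ • u + x₂ • w) (hx0 : x ≠ 0)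
    (hle : padicNorm p x₁ ≤ padicNorm p x₂) : x₂ ≠ 0 := by
  rintro rfl
  obtain rfl : x₁ = 0 := by
    by_contra h
    exact (padicNorm_pos h).not_ge (by simpa using hle)
  exact hx0 (by simp [hx])

end pairLat

section criterion

variable [Fact p.Prime] {x₁ x₂ y₁ y₂ : ℚ}

theorem padicNorm_det_lt_of_zpRelV (hli : LinearIndependent ℚ ![u, w])
    (hx : x = x₁ • u + x₂ • w) (hy : y = y₁ • u + y₂ • w) (h : ZpRelV p (pairLat p u w) x y) :
    padicNorm p (x₁ * y₂ - x₂ * y₁) <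
      max (padicNorm p x₁) (padicNorm p x₂) * max (padicNorm p y₁) (padicNorm p y₂) := by
  obtain ⟨-, -, ⟨α, hα, rfl⟩, ⟨β, hβ, rfl⟩, hxB, hxp, hyB, hyp, hd⟩ := h
  subst hx hy
  rw [show α • (x₁ • u + x₂ • w) - β • (y₁ • u + y₂ • w) =
      (α * x₁ - β * y₁) • u + (α * x₂ - β * y₂) • w by module, mem_pSMul_pairLat_iff hli] at hd
  rw [show α • (x₁ • u + x₂ • w) = (α * x₁) • u + (α * x₂) • w by module] at hxB hxp
  rw [show β • (y₁ • u + y₂ • w) = (β * y₁) • u + (β * y₂) • w by module] at hyB hyp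
  have hX := (mem_pairLat_diff_iff hli).mp ⟨hxB, hxp⟩
  have hY := (mem_pairLat_diff_iff hli).mp ⟨hyB, hyp⟩
  -- the determinant of the two normalized vectors is that of the first one and their difference
  have hdet : padicNorm p (α * β) * padicNorm p (x₁ * y₂ - x₂ * y₁) < 1 := by
    rw [← padicNorm.mul, show α * β * (x₁ * y₂ - x₂ * y₁) =
      (α * x₂) * (α * x₁ - β * y₁) - (α * x₁) * (α * x₂ - β * y₂) by ring]
    refine padicNorm.sub.trans_lt (max_lt ?_ ?_) <;> rw [padicNorm.mul]
    · exact mul_lt_one_of_nonneg_of_lt_one_right (hX ▸ le_max_right _ _)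
        (padicNorm.nonneg _) hd.1
    · exact mul_lt_one_of_nonneg_of_lt_one_right (hX ▸ le_max_left _ _)
        (padicNorm.nonneg _) hd.2
  simp only [padicNorm.mul, ← mul_max_of_nonneg _ _ (padicNorm.nonneg _)] at hX hY hdet
  refine lt_of_mul_lt_mul_left ?_
    (mul_pos (padicNorm_pos (p := p) hα) (padicNorm_pos (p := p) hβ)).le
  calc _ < (1 : ℚ) := hdet
    _ = _ := by rw [← one_mul (1 : ℚ)]; nth_rw 1 [← hX, ← hY]; ring

theorem inv_smul_mem_pairLat_diff (hli : LinearIndependent ℚ ![u, w]) (hx : x = x₁ • u + x₂ • w)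
    (hx₁ : x₁ ≠ 0) (hxs : padicNorm p x₂ ≤ padicNorm p x₁) :
    x₁⁻¹ • x ∈ pairLat p u w \ pSMul p (pairLat p u w) := by
  rw [hx, show x₁⁻¹ • (x₁ • u + x₂ • w) = (1 : ℚ) • u + (x₂ / x₁) • w by
    rw [smul_add, smul_smul, smul_smul, inv_mul_cancel₀ hx₁, div_eq_inv_mul],
    mem_pairLat_diff_iff hli, padicNorm.one, padicNorm.div]
  exact max_eq_left (div_le_one_of_le₀ hxs (padicNorm.nonneg _))

theorem zpRelV_pairLat_of_slope (hli : LinearIndependent ℚ ![u, w])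
    (hx : x = x₁ • u + x₂ • w) (hy : y = y₁ • u + y₂ • w) (hx₁ : x₁ ≠ 0) (hy₁ : y₁ ≠ 0)
    (hxs : padicNorm p x₂ ≤ padicNorm p x₁) (hys : padicNorm p y₂ ≤ padicNorm p y₁)
    (hdet : padicNorm p (x₁ * y₂ - x₂ * y₁) < padicNorm p x₁ * padicNorm p y₁) :
    ZpRelV p (pairLat p u w) x y := by
  obtain ⟨hxB, hxp⟩ := inv_smul_mem_pairLat_diff hli hx hx₁ hxs
  obtain ⟨hyB, hyp⟩ := inv_smul_mem_pairLat_diff hli hy hy₁ hys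
  refine ⟨_, _, ⟨_, inv_ne_zero hx₁, rfl⟩, ⟨_, inv_ne_zero hy₁, rfl⟩, hxB, hxp, hyB, hyp, ?_⟩
  rw [hx, hy, show x₁⁻¹ • (x₁ • u + x₂ • w) - y₁⁻¹ • (y₁ • u + y₂ • w) =
      (0 : ℚ) • u + (-((x₁ * y₂ - x₂ * y₁) / (x₁ * y₁))) • w by
    rw [smul_add, smul_add, smul_smul, smul_smul, smul_smul, smul_smul, inv_mul_cancel₀ hx₁,
      inv_mul_cancel₀ hy₁]
    match_scalars <;> field_simp <;> ring, mem_pSMul_pairLat_iff hli, padicNorm.neg,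
    padicNorm.div, padicNorm.mul]
  exact ⟨by simp, (div_lt_one (mul_pos (padicNorm_pos hx₁) (padicNorm_pos hy₁))).mpr hdet⟩

theorem zpRelV_pairLat_iff (hli : LinearIndependent ℚ ![u, w])
    (hx : x = x₁ • u + x₂ • w) (hy : y = y₁ • u + y₂ • w) :
    ZpRelV p (pairLat p u w) x y ↔ padicNorm p (x₁ * y₂ - x₂ * y₁) <
      max (padicNorm p x₁) (padicNorm p x₂) * max (padicNorm p y₁) (padicNorm p y₂) := by
  refine ⟨padicNorm_det_lt_of_zpRelV hli hx hy, fun h => ?_⟩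
  wlog hxs : padicNorm p x₂ ≤ padicNorm p x₁ generalizing u w x₁ x₂ y₁ y₂
  · rw [pairLat_comm]
    refine this (LinearIndependent.pair_symm_iff.mp hli) (hx.trans (add_comm _ _))
      (hy.trans (add_comm _ _)) ?_ (le_of_not_ge hxs)
    rwa [max_comm, max_comm (padicNorm p y₂), ← padicNorm.neg, neg_sub]
  have hpos := (padicNorm.nonneg _).trans_lt h
  rw [max_eq_left hxs] at h hpos
  have hx₁ : x₁ ≠ 0 := by rintro rfl; simp at hpos
  have hys : padicNorm p y₂ ≤ padicNorm p y₁ := by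
    by_contra! hys
    have hlt : padicNorm p (x₂ * y₁) < padicNorm p (x₁ * y₂) := by
      rw [padicNorm.mul, padicNorm.mul]
      exact mul_lt_mul_of_le_of_lt_of_nonneg_of_pos hxs hys (padicNorm.nonneg _)
        (padicNorm_pos hx₁)
    rw [max_eq_right hys.le, padicNorm_sub_eq_left_of_lt hlt, padicNorm.mul] at h
    exact h.false
  rw [max_eq_left hys] at h hpos
  have hy₁ : y₁ ≠ 0 := by rintro rfl; simp at hpos
  exact zpRelV_pairLat_of_slope hli hx hy hx₁ hy₁ hxs hys h

theorem zpRelV_pairLat_left_iff (hli : LinearIndependent ℚ ![u, w]) (hx : x = x₁ • u + x₂ • w) :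
    ZpRelV p (pairLat p u w) x u ↔ padicNorm p x₂ < padicNorm p x₁ := by
  rw [zpRelV_pairLat_iff hli hx (show u = (1 : ℚ) • u + (0 : ℚ) • w by module)]
  simp

theorem zpRelV_pairLat_smul_iff (hli : LinearIndependent ℚ ![u, w]) {d : ℚ} (hd : d ≠ 0)
    (hx : x = x₁ • u + x₂ • w) (hy : y = y₁ • u + y₂ • w) :
    ZpRelV p (pairLat p u (d • w)) x y ↔
      padicNorm p d * padicNorm p (x₁ * y₂ - x₂ * y₁) <
        max (padicNorm p (d * x₁)) (padicNorm p x₂) *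
          max (padicNorm p (d * y₁)) (padicNorm p y₂) := by
  have hd' := padicNorm_pos (p := p) hd
  have hmax : ∀ a b : ℚ, max (padicNorm p a) (padicNorm p (b / d)) =
      max (padicNorm p (d * a)) (padicNorm p b) / padicNorm p d := by
    intro a b
    rw [← max_div_div_right hd'.le, padicNorm.mul, padicNorm.div, mul_div_cancel_left₀ _ hd'.ne']
  rw [zpRelV_pairLat_iff (linearIndependent_pair_smul_right hli hd) (x₁ := x₁) (x₂ := x₂ / d)
    (by rw [hx, smul_smul, div_mul_cancel₀ _ hd]) (y₁ := y₁) (y₂ := y₂ / d)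
    (by rw [hy, smul_smul, div_mul_cancel₀ _ hd]), hmax, hmax,
    show x₁ * (y₂ / d) - x₂ / d * y₁ = (x₁ * y₂ - x₂ * y₁) / d by ring, padicNorm.div,
    div_mul_div_comm, div_lt_div_iff₀ hd' (mul_pos hd' hd'), ← mul_assoc,
    mul_comm (padicNorm p (x₁ * y₂ - x₂ * y₁)), mul_lt_mul_iff_of_pos_right hd']

theorem zpRelV_pairLat_trans (hli : LinearIndependent ℚ ![u, w]) {z₁ z₂ : ℚ}
    (hx : x = x₁ • u + x₂ • w) (hy : y = y₁ • u + y₂ • w) (hz : z = z₁ • u + z₂ • w)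
    (hxy : ZpRelV p (pairLat p u w) x y) (hyz : ZpRelV p (pairLat p u w) y z) :
    ZpRelV p (pairLat p u w) x z := by
  rw [zpRelV_pairLat_iff hli hx hy] at hxy
  rw [zpRelV_pairLat_iff hli hy hz] at hyz
  rw [zpRelV_pairLat_iff hli hx hz]
  set Mx := max (padicNorm p x₁) (padicNorm p x₂)
  set My := max (padicNorm p y₁) (padicNorm p y₂)
  set Mz := max (padicNorm p z₁) (padicNorm p z₂)
  have hMy : 0 < My := pos_of_mul_pos_right ((padicNorm.nonneg _).trans_lt hxy)
    (le_max_of_le_left (padicNorm.nonneg _))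
  have hMx : 0 < Mx := pos_of_mul_pos_left ((padicNorm.nonneg _).trans_lt hxy) hMy.le
  have hMz : 0 < Mz := pos_of_mul_pos_right ((padicNorm.nonneg _).trans_lt hyz) hMy.le
  -- `det(x,z) • y = det(x,y) • z + det(y,z) • x`, read off at a coordinate of `y` of maximal norm
  have key : ∀ a b c : ℚ, (x₁ * z₂ - x₂ * z₁) * c =
      (x₁ * y₂ - x₂ * y₁) * b + (y₁ * z₂ - y₂ * z₁) * a →
      padicNorm p c = My → padicNorm p a ≤ Mx → padicNorm p b ≤ Mz →
      padicNorm p (x₁ * z₂ - x₂ * z₁) < Mx * Mz := by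
    intro a b c hid hc ha hb
    refine lt_of_mul_lt_mul_right ?_ hMy.le
    calc padicNorm p (x₁ * z₂ - x₂ * z₁) * My = padicNorm p ((x₁ * y₂ - x₂ * y₁) * b +
          (y₁ * z₂ - y₂ * z₁) * a) := by rw [← hid, padicNorm.mul, hc]
      _ ≤ max (padicNorm p (x₁ * y₂ - x₂ * y₁) * padicNorm p b)
          (padicNorm p (y₁ * z₂ - y₂ * z₁) * padicNorm p a) := by
        rw [← padicNorm.mul, ← padicNorm.mul]; exact padicNorm.nonarchimedean
      _ < Mx * Mz * My := by
        apply max_lt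
        · nlinarith [mul_le_mul_of_nonneg_left hb (padicNorm.nonneg (p := p) (x₁ * y₂ - x₂ * y₁))]
        · nlinarith [mul_le_mul_of_nonneg_left ha (padicNorm.nonneg (p := p) (y₁ * z₂ - y₂ * z₁))]
  rcases le_total (padicNorm p y₁) (padicNorm p y₂) with h | h
  · exact key x₂ z₂ y₂ (by ring) (max_eq_right h).symm (le_max_right _ _) (le_max_right _ _)
  · exact key x₁ z₁ y₁ (by ring) (max_eq_left h).symm (le_max_left _ _) (le_max_left _ _)

end criterion

section zpSpanV

variable [Fact p.Prime] {s : Finset V}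

theorem mem_zpSpanV_iff : z ∈ zpSpanV p s ↔
    ∃ c : V → ℚ, (∀ t, padicNorm p (c t) ≤ 1) ∧ z = ∑ t ∈ s, c t • t := by
  simp only [zpSpanV, Set.mem_ofPred_eq, padicNorm_le_one_iff_not_dvd_den]

theorem mem_zpSpanV_of_mem {t : V} (ht : t ∈ s) : t ∈ zpSpanV p s := by
  classical
  refine mem_zpSpanV_iff.mpr ⟨fun t' => if t' = t then 1 else 0, fun t' => ?_, ?_⟩
  · dsimp only; split_ifs <;> simp
  · simp [ite_smul, ht]

theorem add_mem_zpSpanV (hz : z ∈ zpSpanV p s) (hy : y ∈ zpSpanV p s) :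
    z + y ∈ zpSpanV p s := by
  obtain ⟨c, hc, rfl⟩ := mem_zpSpanV_iff.mp hz
  obtain ⟨d, hd, rfl⟩ := mem_zpSpanV_iff.mp hy
  exact mem_zpSpanV_iff.mpr ⟨c + d, fun t => padicNorm.nonarchimedean.trans (max_le (hc t) (hd t)),
    by simp [add_smul, Finset.sum_add_distrib]⟩

theorem smul_mem_zpSpanV {a : ℚ} (ha : padicNorm p a ≤ 1) (hz : z ∈ zpSpanV p s) :
    a • z ∈ zpSpanV p s := by
  obtain ⟨c, hc, rfl⟩ := mem_zpSpanV_iff.mp hz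
  refine mem_zpSpanV_iff.mpr ⟨a • c, fun t => ?_, by simp [Finset.smul_sum, smul_smul]⟩
  rw [Pi.smul_apply, smul_eq_mul, padicNorm.mul]
  exact mul_le_one₀ ha (padicNorm.nonneg _) (hc t)

theorem pairLat_subset_zpSpanV (hu : u ∈ zpSpanV p s) (hw : w ∈ zpSpanV p s) :
    pairLat p u w ⊆ zpSpanV p s := by
  rintro _ ⟨a, b, ha, hb, rfl⟩
  exact add_mem_zpSpanV (smul_mem_zpSpanV ha hu) (smul_mem_zpSpanV hb hw)

theorem zpSpanV_subset_pairLat (hs : ∀ t ∈ s, t ∈ pairLat p u w) :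
    zpSpanV p s ⊆ pairLat p u w := by
  intro z hz
  obtain ⟨c, hc, rfl⟩ := mem_zpSpanV_iff.mp hz
  exact Finset.sum_induction _ (· ∈ pairLat p u w) (fun _ _ => add_mem_pairLat) zero_mem_pairLat
    fun t ht => smul_mem_pairLat (hc t) (hs t ht)

theorem exists_mem_max_padicNorm_apply (hspan : Submodule.span ℚ (zpSpanV p s) = ⊤)
    {φ : V →ₗ[ℚ] ℚ} (hφ : φ ≠ 0) :
    ∃ g ∈ s, φ g ≠ 0 ∧ ∀ t ∈ s, padicNorm p (φ t) ≤ padicNorm p (φ g) := by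
  obtain ⟨t, hts, ht⟩ : ∃ t ∈ s, φ t ≠ 0 := by
    by_contra! H
    refine hφ (LinearMap.ker_eq_top.mp (eq_top_iff.mpr (hspan ▸ Submodule.span_le.mpr ?_)))
    rintro _ ⟨c, -, rfl⟩
    simpa using Finset.sum_eq_zero fun t ht => by rw [H t ht, mul_zero]
  obtain ⟨g, hgs, hg⟩ := s.exists_max_image (fun t => padicNorm p (φ t)) ⟨t, hts⟩
  exact ⟨g, hgs, fun h0 => (padicNorm_pos ht).not_ge (by simpa [h0] using hg t hts), hg⟩

end zpSpanV

section plane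

variable {A : Type*} {f : Projectivization ℚ (Fin 2 → ℚ) → A} {g h h' q : Fin 2 → ℚ}

theorem exists_coords (hli : LinearIndependent ℚ ![g, h]) (x : Fin 2 → ℚ) :
    ∃ a b : ℚ, x = a • g + b • h := by
  have hx : x ∈ Submodule.span ℚ (Set.range ![g, h]) := by
    rw [hli.span_eq_top_of_card_eq_finrank (by simp)]; trivial
  obtain ⟨c, hc⟩ := (Submodule.mem_span_range_iff_exists_fun ℚ).mp hx
  exact ⟨c 0, c 1, by simpa [Fin.sum_univ_two] using hc.symm⟩

variable [Fact p.Prime]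

theorem exists_pairLat_eq_of_isZpLatIn {B : Set (Fin 2 → ℚ)} (hB : IsZpLatIn p ⊤ B) :
    ∃ u w, LinearIndependent ℚ ![u, w] ∧ B = pairLat p u w := by
  obtain ⟨⟨s, rfl⟩, hspan⟩ := hB
  obtain ⟨g, hgs, hg0, hg⟩ := exists_mem_max_padicNorm_apply hspan (φ := LinearMap.proj 0)
    fun h => by simpa using LinearMap.congr_fun h (Pi.single 0 1)
  let ψ : (Fin 2 → ℚ) →ₗ[ℚ] ℚ := g 0 • LinearMap.proj 1 - g 1 • LinearMap.proj 0
  have hψ : ∀ t : Fin 2 → ℚ, ψ t = g 0 * t 1 - g 1 * t 0 := fun t => by simp [ψ]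
  obtain ⟨h, hhs, hh0, hh⟩ := exists_mem_max_padicNorm_apply hspan (φ := ψ)
    fun h => hg0 (by simpa [hψ] using LinearMap.congr_fun h (Pi.single 1 1))
  simp only [LinearMap.proj_apply] at hg0 hg
  obtain ⟨h', hh'⟩ : ∃ h', h' = h - (h 0 / g 0) • g := ⟨_, rfl⟩
  have hdecomp : ∀ t : Fin 2 → ℚ, t = (t 0 / g 0) • g + (ψ t / ψ h) • h' := by
    intro t
    rw [hψ, hψ] at *
    ext i; fin_cases i <;> simp [hh'] <;> field_simp <;> ring
  refine ⟨g, h', ?_, Set.Subset.antisymm ?_ ?_⟩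
  · refine (LinearIndependent.pair_iff' fun h0 => hg0 (by simp [h0])).mpr fun a ha => hh0 ?_
    have e0 := congrFun ha 0
    have e1 := congrFun ha 1
    simp only [hh', Pi.smul_apply, Pi.sub_apply, smul_eq_mul] at e0 e1
    rw [hψ]
    field_simp at e0 e1
    obtain rfl : a = 0 := by simpa [hg0] using e0
    linarith
  · refine zpSpanV_subset_pairLat fun t ht => hdecomp t ▸ ⟨_, _, ?_, ?_, rfl⟩ <;>
      rw [padicNorm.div] <;> refine div_le_one_of_le₀ ?_ (padicNorm.nonneg _)
    exacts [hg t ht, hh t ht]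
  · refine pairLat_subset_zpSpanV (mem_zpSpanV_of_mem hgs) ?_
    rw [hh', sub_eq_add_neg, ← neg_smul]
    refine add_mem_zpSpanV (mem_zpSpanV_of_mem hhs) (smul_mem_zpSpanV ?_ (mem_zpSpanV_of_mem hgs))
    rw [padicNorm.neg, padicNorm.div]
    exact div_le_one_of_le₀ (hg h hhs) (padicNorm.nonneg _)

theorem isZpLatIn_pairLat (hli : LinearIndependent ℚ ![g, h]) : IsZpLatIn p ⊤ (pairLat p g h) := by
  classical
  refine ⟨⟨{g, h}, Set.Subset.antisymm
    (pairLat_subset_zpSpanV (mem_zpSpanV_of_mem (by simp)) (mem_zpSpanV_of_mem (by simp)))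
    (zpSpanV_subset_pairLat (by simp [left_mem_pairLat, right_mem_pairLat]))⟩, ?_⟩
  refine eq_top_iff.mpr ((hli.span_eq_top_of_card_eq_finrank (by simp)).symm.le.trans
    (Submodule.span_mono ?_))
  rintro _ ⟨i, rfl⟩
  fin_cases i
  exacts [left_mem_pairLat, right_mem_pairLat]

theorem exists_pairLat_eq_of_mem_diff (hli : LinearIndependent ℚ ![g, h])
    (hq : q ∈ pairLat p g h \ pSMul p (pairLat p g h)) :
    ∃ h', LinearIndependent ℚ ![q, h'] ∧ pairLat p q h' = pairLat p g h := by
  obtain ⟨a, b, ha, hb, rfl⟩ := hq.1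
  rw [mem_pairLat_diff_iff hli] at hq
  rcases max_choice (padicNorm p a) (padicNorm p b) with hm | hm <;> rw [hm] at hq
  · have ha0 : a ≠ 0 := fun h0 => by simp [h0] at hq
    have hli' := (LinearIndependent.pair_add_smul_add_smul_iff a b 0 1).mpr
      ⟨hli, by simpa using ha0⟩
    refine ⟨h, by simpa using hli', ?_⟩
    rw [pairLat_comm, add_comm, pairLat_add_smul_right hb, pairLat_smul_right hq, pairLat_comm]
  · have hb0 : b ≠ 0 := fun h0 => by simp [h0] at hq
    have hli' := (LinearIndependent.pair_add_smul_add_smul_iff a b 1 0).mpr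
      ⟨hli, by simpa using hb0.symm⟩
    refine ⟨g, by simpa using hli', ?_⟩
    rw [pairLat_comm, pairLat_add_smul_right ha, pairLat_smul_right hq]

theorem exists_smul_image_eq_pairLat (hli : LinearIndependent ℚ ![g, h]) {B : Set (Fin 2 → ℚ)}
    (hB : IsZpLatIn p ⊤ B) : ∃ a : ℚ, a ≠ 0 ∧ ∃ g' h' : Fin 2 → ℚ, ∃ d : ℚ,
      LinearIndependent ℚ ![g', h'] ∧ pairLat p g' h' = pairLat p g h ∧ d ≠ 0 ∧
        padicNorm p d ≤ 1 ∧ (a • ·) '' B = pairLat p g' (d • h') := by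
  obtain ⟨g₁, g₂, hli₁, rfl⟩ := exists_pairLat_eq_of_isZpLatIn hB
  obtain ⟨c₁, e₁, h₁⟩ := exists_coords hli g₁
  obtain ⟨c₂, e₂, h₂⟩ := exists_coords hli g₂
  clear hB
  wlog h12 : max (padicNorm p c₂) (padicNorm p e₂) ≤ max (padicNorm p c₁) (padicNorm p e₁)
    generalizing g₁ g₂ c₁ e₁ c₂ e₂
  · rw [pairLat_comm g₁ g₂]
    exact this g₂ g₁ (LinearIndependent.pair_symm_iff.mp hli₁) c₂ e₂ h₂ c₁ e₁ h₁ (le_of_not_ge h12)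
  obtain ⟨a, ha, han⟩ := exists_padicNorm_mul_max_eq_one (p := p) (a := c₁) (b := e₁) (by
    by_contra! h0
    exact hli₁.ne_zero 0 (by simp [h₁, h0.1, h0.2]))
  have hsmul : ∀ c e : ℚ, a • (c • g + e • h) = (a * c) • g + (a * e) • h := fun c e => by module
  have hmax : ∀ c e : ℚ, max (padicNorm p (a * c)) (padicNorm p (a * e)) =
      padicNorm p a * max (padicNorm p c) (padicNorm p e) := fun c e => by
    rw [padicNorm.mul, padicNorm.mul, mul_max_of_nonneg _ _ (padicNorm.nonneg _)]
  have hG : a • g₁ ∈ pairLat p g h \ pSMul p (pairLat p g h) := by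
    rw [h₁, hsmul, mem_pairLat_diff_iff hli, hmax, han]
  have hG₂ : a • g₂ ∈ pairLat p g h := by
    rw [h₂, hsmul, mem_pairLat_iff hli, ← max_le_iff, hmax, ← han]
    exact mul_le_mul_of_nonneg_left h12 (padicNorm.nonneg _)
  obtain ⟨h', hli', hB⟩ := exists_pairLat_eq_of_mem_diff hli hG
  obtain ⟨c, d, hc, hd, hcd⟩ := hB ▸ hG₂
  have hd0 : d ≠ 0 := by
    rintro rfl
    have := (LinearIndependent.pair_smul_iff ha).mpr hli₁
    exact (LinearIndependent.pair_iff' (this.ne_zero 0)).mp this c (by simpa using hcd)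
  refine ⟨a, ha, a • g₁, h', d, hli', hB, hd0, hd, ?_⟩
  rw [image_smul_pairLat, ← hcd, pairLat_add_smul_right hc]

theorem isConstOffClass_of_inducedOn_pairLat_smul (hli : LinearIndependent ℚ ![g, h]) {d : ℚ}
    (hd0 : d ≠ 0) (hd : padicNorm p d < 1) (hf : InducedOn f ⊤ p (pairLat p g (d • h))) :
    IsConstOffClass f p (pairLat p g h) g := by
  intro x y hx hy hxg hyg
  obtain ⟨x₁, x₂, hxc⟩ := exists_coords hli x
  obtain ⟨y₁, y₂, hyc⟩ := exists_coords hli y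
  rw [zpRelV_pairLat_left_iff hli hxc, not_lt] at hxg
  rw [zpRelV_pairLat_left_iff hli hyc, not_lt] at hyg
  have hx₂ := padicNorm_pos (p := p) (right_coord_ne_zero hxc hx hxg)
  have hy₂ := padicNorm_pos (p := p) (right_coord_ne_zero hyc hy hyg)
  have hmax : ∀ {a b : ℚ}, padicNorm p a ≤ padicNorm p b →
      max (padicNorm p (d * a)) (padicNorm p b) = padicNorm p b := fun hab => max_eq_right (by
    rw [padicNorm.mul]; exact (mul_le_of_le_one_left (padicNorm.nonneg _) hd.le).trans hab)
  refine hf x y hx hy trivial trivial ((zpRelV_pairLat_smul_iff hli hd0 hxc hyc).mpr ?_)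
  rw [hmax hxg, hmax hyg]
  calc padicNorm p d * padicNorm p (x₁ * y₂ - x₂ * y₁)
      ≤ padicNorm p d * (padicNorm p x₂ * padicNorm p y₂) := by
        refine mul_le_mul_of_nonneg_left (padicNorm.sub.trans (max_le ?_ ?_)) (padicNorm.nonneg _)
          <;> rw [padicNorm.mul]
        · exact mul_le_mul_of_nonneg_right hxg (padicNorm.nonneg _)
        · exact mul_le_mul_of_nonneg_left hyg (padicNorm.nonneg _)
    _ < padicNorm p x₂ * padicNorm p y₂ := mul_lt_of_lt_one_left (mul_pos hx₂ hy₂) hd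

theorem const_of_inducedOn_pairLat_smul (hli : LinearIndependent ℚ ![g, h]) {d : ℚ} (hd0 : d ≠ 0)
    (hd : padicNorm p d < padicNorm p (p : ℚ)) (hf : InducedOn f ⊤ p (pairLat p g h))
    (hf' : InducedOn f ⊤ p (pairLat p g (d • h))) (x y : Fin 2 → ℚ) (hx : x ≠ 0) (hy : y ≠ 0) :
    f (Projectivization.mk ℚ x hx) = f (Projectivization.mk ℚ y hy) := by
  have hp := padicNorm.padicNorm_p_lt_one_of_prime (p := p)
  obtain ⟨z, hz⟩ : ∃ z, z = (1 : ℚ) • g + (p : ℚ) • h := ⟨_, rfl⟩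
  have hz0 : z ≠ 0 := hz ▸ fun h0 => one_ne_zero (LinearIndependent.pair_iff.mp hli _ _ h0).1
  have hg0 : g ≠ 0 := hli.ne_zero 0
  have hzg : ZpRelV p (pairLat p g h) z g := by
    rw [zpRelV_pairLat_left_iff hli hz, padicNorm.one]; exact hp
  -- the sublattice identifies every point off the class of `g` with `z`
  have key : ∀ x (hx : x ≠ 0),
      f (Projectivization.mk ℚ x hx) = f (Projectivization.mk ℚ z hz0) := by
    intro x hx
    by_cases hxg : ZpRelV p (pairLat p g h) x g
    · exact (hf x g hx hg0 trivial trivial hxg).trans (hf z g hz0 hg0 trivial trivial hzg).symm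
    obtain ⟨x₁, x₂, hxc⟩ := exists_coords hli x
    rw [zpRelV_pairLat_left_iff hli hxc, not_lt] at hxg
    have hx₂ := padicNorm_pos (p := p) (right_coord_ne_zero hxc hx hxg)
    refine hf' x z hx hz0 trivial trivial ((zpRelV_pairLat_smul_iff hli hd0 hxc hz).mpr ?_)
    have hsmall : padicNorm p (x₁ * p) < padicNorm p x₂ := by
      rw [padicNorm.mul]
      exact (mul_le_mul_of_nonneg_right hxg (padicNorm.nonneg _)).trans_lt
        (mul_lt_of_lt_one_right hx₂ hp)
    simp only [mul_one]
    rw [max_eq_right (by rw [padicNorm.mul]; exact (mul_le_of_le_one_left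
      (padicNorm.nonneg _) (hd.trans hp).le).trans hxg), max_eq_right hd.le,
      ← padicNorm.neg (x₁ * p - x₂), neg_sub, padicNorm_sub_eq_left_of_lt hsmall, mul_comm]
    exact mul_lt_mul_of_pos_left hd hx₂
  exact (key x hx).trans (key y hy).symm

theorem const_of_isConstOffClass_of_not_zpRelV (hli : LinearIndependent ℚ ![q, h])
    (hf : InducedOn f ⊤ p (pairLat p q h)) (hg : g ∈ pairLat p q h \ pSMul p (pairLat p q h))
    (hgq : ¬ ZpRelV p (pairLat p q h) g q) (hfg : IsConstOffClass f p (pairLat p q h) g)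
    (hfq : IsConstOffClass f p (pairLat p q h) q) (x y : Fin 2 → ℚ) (hx : x ≠ 0) (hy : y ≠ 0) :
    f (Projectivization.mk ℚ x hx) = f (Projectivization.mk ℚ y hy) := by
  have hqg : ¬ ZpRelV p (pairLat p q h) q g := fun h' =>
    hgq (zpRelV_symm (fun _ => neg_mem_pairLat) h')
  obtain ⟨g₁, g₂, -, -, hgc⟩ := hg.1
  rw [← hgc, mem_pairLat_diff_iff hli] at hg
  rw [zpRelV_pairLat_left_iff hli hgc.symm, not_lt] at hgq
  have hg₂ : padicNorm p g₂ = 1 := by rwa [max_eq_right hgq] at hg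
  have hg₁ : padicNorm p (g₁ + 1) ≤ 1 :=
    padicNorm.nonarchimedean.trans (max_le (hg ▸ le_max_left _ _) padicNorm.one.le)
  -- a third residue class, that of `g + q`
  obtain ⟨z, hz⟩ : ∃ z, z = (g₁ + 1) • q + g₂ • h := ⟨_, rfl⟩
  have hz0 : z ≠ 0 := hz ▸ fun h0 => by
    simp [(LinearIndependent.pair_iff.mp hli _ _ h0).2] at hg₂
  have hzq : ¬ ZpRelV p (pairLat p q h) z q := by
    rw [zpRelV_pairLat_left_iff hli hz, not_lt, hg₂]; exact hg₁
  have hzg : ¬ ZpRelV p (pairLat p q h) z g := by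
    rw [zpRelV_pairLat_iff hli hz hgc.symm, show (g₁ + 1) * g₂ - g₂ * g₁ = g₂ by ring, hg, hg₂,
      max_eq_right hg₁]
    simp
  have hq0 : q ≠ 0 := hli.ne_zero 0
  have key : ∀ x (hx : x ≠ 0),
      f (Projectivization.mk ℚ x hx) = f (Projectivization.mk ℚ z hz0) := by
    intro x hx
    by_cases hxq : ZpRelV p (pairLat p q h) x q
    · exact (hf x q hx hq0 trivial trivial hxq).trans (hfg q z hq0 hz0 hqg hzg)
    · exact hfq x z hx hz0 hxq hzq
  exact (key x hx).trans (key y hy).symm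

theorem not_zpRelV_pairLat_smul_p {x y : Fin 2 → ℚ} (hli : LinearIndependent ℚ ![q, h])
    (hxq : ZpRelV p (pairLat p q h) x q) (hyq : ¬ ZpRelV p (pairLat p q h) y q) (hy : y ≠ 0) :
    ¬ ZpRelV p (pairLat p q ((p : ℚ) • h)) x y := by
  obtain ⟨x₁, x₂, hxc⟩ := exists_coords hli x
  obtain ⟨y₁, y₂, hyc⟩ := exists_coords hli y
  rw [zpRelV_pairLat_left_iff hli hxc] at hxq
  rw [zpRelV_pairLat_left_iff hli hyc, not_lt] at hyq
  have hy₂ := padicNorm_pos (p := p) (right_coord_ne_zero hyc hy hyq)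
  have hmx : padicNorm p x₂ ≤ padicNorm p (p * x₁) := by
    rw [padicNorm.mul, padicNorm.padicNorm_p_of_prime]; exact padicNorm_le_inv_mul_of_lt hxq
  have hmy : padicNorm p (p * y₁) ≤ padicNorm p y₂ := by
    rw [padicNorm.mul]
    exact (mul_le_of_le_one_left (padicNorm.nonneg _)
      padicNorm.padicNorm_p_lt_one_of_prime.le).trans hyq
  have hdet : padicNorm p (x₂ * y₁) < padicNorm p (x₁ * y₂) := by
    rw [padicNorm.mul, padicNorm.mul]
    exact mul_lt_mul_of_lt_of_le_of_nonneg_of_pos hxq hyq (padicNorm.nonneg _) hy₂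
  rw [zpRelV_pairLat_smul_iff hli cast_ne_zero_of_prime hxc hyc, max_eq_left hmx,
    max_eq_right hmy, padicNorm_sub_eq_left_of_lt hdet, padicNorm.mul, padicNorm.mul, mul_assoc]
  exact lt_irrefl _

theorem inducedOn_pairLat_smul_p (hli : LinearIndependent ℚ ![q, h])
    (hf : InducedOn f ⊤ p (pairLat p q h)) (hfq : IsConstOffClass f p (pairLat p q h) q) :
    InducedOn f ⊤ p (pairLat p q ((p : ℚ) • h)) := by
  have hq0 : q ≠ 0 := hli.ne_zero 0
  intro x y hx hy _ _ hxy
  by_cases hxq : ZpRelV p (pairLat p q h) x q <;> by_cases hyq : ZpRelV p (pairLat p q h) y q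
  · exact (hf x q hx hq0 trivial trivial hxq).trans (hf y q hy hq0 trivial trivial hyq).symm
  · exact absurd hxy (not_zpRelV_pairLat_smul_p hli hxq hyq hy)
  · exact absurd (zpRelV_symm (fun _ => neg_mem_pairLat) hxy)
      (not_zpRelV_pairLat_smul_p hli hyq hxq hx)
  · exact hfq x y hx hy hxq hyq

theorem pairLat_smul_p_eq (hli : LinearIndependent ℚ ![q, h]) :
    pairLat p q ((p : ℚ) • h) = {x | x ∈ pairLat p q h ∧
      (x ∈ pSMul p (pairLat p q h) ∨ ZpRelV p (pairLat p q h) x q)} := by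
  ext x
  constructor
  · rintro ⟨a, b, ha, hb, rfl⟩
    have hpb : padicNorm p (p * b) < 1 := by
      rw [padicNorm.mul]
      exact mul_lt_one_of_nonneg_of_lt_one_left (padicNorm.nonneg _)
        padicNorm.padicNorm_p_lt_one_of_prime hb
    rw [smul_smul, mul_comm b]
    refine ⟨(mem_pairLat_iff hli).mpr ⟨ha, hpb.le⟩, ?_⟩
    rw [mem_pSMul_pairLat_iff hli, zpRelV_pairLat_left_iff hli rfl]
    rcases ha.lt_or_eq with ha | ha
    exacts [Or.inl ⟨ha, hpb⟩, Or.inr (ha ▸ hpb)]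
  · rintro ⟨⟨a, b, ha, hb, rfl⟩, hx⟩
    rw [mem_pSMul_pairLat_iff hli, zpRelV_pairLat_left_iff hli rfl] at hx
    refine ⟨a, b / p, ha, (padicNorm_div_p_le_one_iff b).mpr ?_,
      by rw [smul_smul, div_mul_cancel₀ _ cast_ne_zero_of_prime]⟩
    rcases hx with hx | hx
    exacts [hx.2, hx.trans_le ha]

theorem pairLat_smul_p_eq_of_zpRelV (hli : LinearIndependent ℚ ![q, h])
    (hli' : LinearIndependent ℚ ![g, h']) (hB : pairLat p g h' = pairLat p q h)
    (hgq : ZpRelV p (pairLat p q h) g q) :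
    pairLat p g ((p : ℚ) • h') = pairLat p q ((p : ℚ) • h) := by
  rw [pairLat_smul_p_eq hli, pairLat_smul_p_eq hli', hB]
  obtain ⟨g₁, g₂, -, -, hg⟩ := hB ▸ (left_mem_pairLat : g ∈ pairLat p g h')
  have hq : q = (1 : ℚ) • q + (0 : ℚ) • h := by module
  ext x
  refine and_congr_right fun ⟨x₁, x₂, _, _, hx⟩ => or_congr_right ⟨fun hxg => ?_, fun hxq => ?_⟩
  · exact zpRelV_pairLat_trans hli hx.symm hg.symm hq hxg hgq
  · exact zpRelV_pairLat_trans hli hx.symm hq hg.symm hxq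
      (zpRelV_symm (fun _ => neg_mem_pairLat) hgq)

theorem not_latEq_pairLat_smul_p (hli : LinearIndependent ℚ ![q, h]) :
    ¬ LatEq (pairLat p q h) (pairLat p q ((p : ℚ) • h)) := by
  rintro ⟨c, hc, hB⟩
  rw [image_smul_pairLat] at hB
  obtain ⟨a, b, ha, -, hab⟩ := hB ▸ (left_mem_pairLat : q ∈ pairLat p q ((p : ℚ) • h))
  have hac : a * c = 1 := (coords_eq_of_linearIndependent hli
    (show (a * c) • q + (b * c) • h = (1 : ℚ) • q + (0 : ℚ) • h by simpa [smul_smul] using hab)).1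
  have hch := hB.symm ▸ (right_mem_pairLat : c • h ∈ pairLat p (c • q) (c • h))
  rw [show c • h = (0 : ℚ) • q + (c / p) • ((p : ℚ) • h) by
    rw [zero_smul, zero_add, smul_smul, div_mul_cancel₀ _ cast_ne_zero_of_prime],
    mem_pairLat_iff (linearIndependent_pair_smul_right hli cast_ne_zero_of_prime),
    padicNorm_div_p_le_one_iff] at hch
  have := congrArg (padicNorm p) hac
  rw [padicNorm.mul, padicNorm.one] at this
  nlinarith [hch.2, padicNorm.nonneg (p := p) a, padicNorm.nonneg (p := p) c]

theorem latEq_or_latEq_of_isConstOffClass (hli : LinearIndependent ℚ ![q, h])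
    (hf : InducedOn f ⊤ p (pairLat p q h)) (hfq : IsConstOffClass f p (pairLat p q h) q)
    (hnc : ∃ x y : Fin 2 → ℚ, ∃ hx : x ≠ 0, ∃ hy : y ≠ 0,
      f (Projectivization.mk ℚ x hx) ≠ f (Projectivization.mk ℚ y hy))
    {B : Set (Fin 2 → ℚ)} (hB : IsZpLatIn p ⊤ B) (hfB : InducedOn f ⊤ p B) :
    LatEq B (pairLat p q h) ∨ LatEq B (pairLat p q ((p : ℚ) • h)) := by
  obtain ⟨x₀, y₀, hx₀, hy₀, hne⟩ := hnc
  obtain ⟨a, ha, g, h', d, hli', hgh, hd0, hd, himg⟩ := exists_smul_image_eq_pairLat hli hB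
  have hf' : InducedOn f ⊤ p (pairLat p g (d • h')) := himg ▸ inducedOn_image_smul ha hfB
  rcases hd.eq_or_lt with hd1 | hd1
  · exact Or.inl ⟨a, ha, by rw [himg, pairLat_smul_right hd1, hgh]⟩
  have hfg := isConstOffClass_of_inducedOn_pairLat_smul hli' hd0 hd1 hf'
  have hgq : ZpRelV p (pairLat p q h) g q := by
    by_contra hgq
    exact hne (const_of_isConstOffClass_of_not_zpRelV hli hf (hgh ▸ left_mem_pairLat_diff hli')
      hgq (hgh ▸ hfg) hfq x₀ y₀ hx₀ hy₀)
  rcases (padicNorm_le_inv_of_lt_one hd1).eq_or_lt with hdp | hdp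
  · refine Or.inr ⟨a, ha, ?_⟩
    have hp0 : (p : ℚ) ≠ 0 := cast_ne_zero_of_prime
    rw [himg, show d • h' = (d / p) • ((p : ℚ) • h') by rw [smul_smul, div_mul_cancel₀ _ hp0],
      pairLat_smul_right (e := d / p) (by rw [padicNorm.div, padicNorm.padicNorm_p_of_prime, hdp,
        div_self (inv_ne_zero hp0)]), pairLat_smul_p_eq_of_zpRelV hli hli' hgh hgq]
  · exact absurd (const_of_inducedOn_pairLat_smul hli' hd0 (by rwa [padicNorm.padicNorm_p_of_prime])
      (hgh ▸ hf) hf' x₀ y₀ hx₀ hy₀) hne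

theorem latEq_of_not_resFlagLine (hli : LinearIndependent ℚ ![g, h])
    (hnot : ¬ ResFlagLine f p (pairLat p g h)) {B : Set (Fin 2 → ℚ)} (hB : IsZpLatIn p ⊤ B)
    (hfB : InducedOn f ⊤ p B) : LatEq B (pairLat p g h) := by
  obtain ⟨a, ha, g', h', d, hli', hgh, hd0, hd, himg⟩ := exists_smul_image_eq_pairLat hli hB
  rcases hd.eq_or_lt with hd1 | hd1
  · exact ⟨a, ha, by rw [himg, pairLat_smul_right hd1, hgh]⟩
  · exact absurd ⟨g', hgh ▸ left_mem_pairLat_diff hli', hgh ▸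
      isConstOffClass_of_inducedOn_pairLat_smul hli' hd0 hd1 (himg ▸ inducedOn_image_smul ha hfB)⟩
      hnot

end plane

end ZpLattice

open ZpLattice

/-- Lemma 3.4: let `f : ℙ(ℚ²) → A` be induced via a
`ℤ_(p)`-lattice `B` from a nonconstant map `f̄ : ℙ(B/pB) → A`.
(1) If `f̄` is a flag map (constant off one point), there are exactly two
equivalence classes of `f`-compatible lattices.
(2) If `f̄` is not a flag map, every `f`-compatible lattice is equivalent
to `B`. -/
theorem stmt9 (p : ℕ) (hp : p.Prime) (A : Type w)
    (f : Projectivization ℚ (Fin 2 → ℚ) → A) (B : Set (Fin 2 → ℚ))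
    (hB : IsZpLatIn p ⊤ B) (hind : InducedOn f ⊤ p B)
    (hnc : ∃ x y : Fin 2 → ℚ, ∃ hx : x ≠ 0, ∃ hy : y ≠ 0,
      f (Projectivization.mk ℚ x hx) ≠ f (Projectivization.mk ℚ y hy)) :
    (ResFlagLine f p B →
      ∃ B₁ B₂ : Set (Fin 2 → ℚ),
        (IsZpLatIn p ⊤ B₁ ∧ InducedOn f ⊤ p B₁) ∧
        (IsZpLatIn p ⊤ B₂ ∧ InducedOn f ⊤ p B₂) ∧
        ¬ LatEq B₁ B₂ ∧
        ∀ B' : Set (Fin 2 → ℚ), IsZpLatIn p ⊤ B' → InducedOn f ⊤ p B' →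
          (LatEq B' B₁ ∨ LatEq B' B₂))
    ∧ (¬ ResFlagLine f p B →
        ∀ B' : Set (Fin 2 → ℚ), IsZpLatIn p ⊤ B' → InducedOn f ⊤ p B' →
          LatEq B' B) := by
  have := Fact.mk hp
  obtain ⟨u, w, hli, rfl⟩ := exists_pairLat_eq_of_isZpLatIn hB
  refine ⟨fun ⟨q, hq, hfq⟩ => ?_,
    fun hnot B' hB' hfB' => latEq_of_not_resFlagLine hli hnot hB' hfB'⟩
  obtain ⟨h, hli', hqh⟩ := exists_pairLat_eq_of_mem_diff hli hq
  rw [← hqh] at hind hfq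
  exact ⟨_, _, ⟨isZpLatIn_pairLat hli', hind⟩,
    ⟨isZpLatIn_pairLat (linearIndependent_pair_smul_right hli' cast_ne_zero_of_prime),
      inducedOn_pairLat_smul_p hli' hind hfq⟩,
    not_latEq_pairLat_smul_p hli', fun B' hB' hfB' =>
      latEq_or_latEq_of_isConstOffClass hli' hind hfq hnc hB' hfB'⟩
end

section
/- Let p be a prime, A a set, and let f: ℙ(ℚ³) → A be a map taking exactly three values, taking at most two values on every projective line, and such that on every projective line the restriction of f is induced via some ℤ_(p)-lattice in the underlying ℚ² from a flag map on the corresponding projective line over F_p. Suppose f is induced via ℤ_(p)-lattices B and B′ of ℚ³ from flag maps f̄: ℙ(B/pB) → A and f̄′: ℙ(B′/pB′) → A, each taking three pairwise distinct values, with associated flags q̄ ∈ l̄ ⊂ ℙ(B/pB) and q̄′ ∈ l̄′ ⊂ ℙ(B′/pB′) (i.e., f̄ is constant on ℙ(B/pB) ∖ l̄, constant on l̄ ∖ {q̄}, and takes a third value at q̄, and similarly for f̄′). If f̄(q̄) = f̄′(q̄′), then B′ = aB for some a ∈ ℚ^×, and f̄ = f̄′ under the identification of ℙ(B/pB) with ℙ(B′/pB′)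 induced by multiplication by a. -/
/- Common set-up for statements about projective spaces `ℙ(V)`: flag maps,
   `ℤ_(p)`-lattices and the associated reduction maps to `ℙ(B/pB)`
   (two nonzero vectors are identified by `ρ_B` iff suitable nonzero scalar
   multiples of them lie in `B ∖ pB` and are congruent modulo `pB`). -/

universe u v w

/-!
The level sets of `f` recover the reduction data of each lattice: `f = a₃` exactly on the residue
disc of `q̄`, and `f ∈ {a₂, a₃}` exactly on the preimage of `l̄`. Hence the residue discs of `q̄`
and `q̄'` coincide, and so do the preimages of `l̄` and `l̄'` once we know `a₂ = a₂'`.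

The values cannot be swapped (`a₂' = a₁`): a `ℚ`-plane spanned by two points of `l̄'` with distinct
reductions reduces into `l̄'`, so `f` would avoid `a₂` on it, while a dimension count in `ℚ³`
produces such a plane meeting the preimage of `l̄ ∖ {q̄}`, where `f = a₂`.

Finally a residue disc determines the lattice up to scaling: if `C = p^m B' ⊆ B` with `m` least,
then `C ⊄ pB`, and for `u ∈ B` the vector `y + p u` (`y ∈ C ∖ pB` in the disc) lies in the
residue disc for `C` as well, which forces `u ∈ C`.
-/

open Pointwise

def zpLocal (p : ℕ) [hp : Fact p.Prime] : Subring ℚ where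
  carrier := {a | ¬ p ∣ a.den}
  mul_mem' {a b} ha hb h := (hp.out.dvd_mul.mp (h.trans (Rat.mul_den_dvd a b))).elim ha hb
  one_mem' := by simpa using hp.out.ne_one
  add_mem' {a b} ha hb h := (hp.out.dvd_mul.mp (h.trans (Rat.add_den_dvd a b))).elim ha hb
  zero_mem' := by simpa using hp.out.ne_one
  neg_mem' {a} ha := by simpa using ha

def IsZpUnit (p : ℕ) (a : ℚ) : Prop := a ≠ 0 ∧ padicValRat p a = 0

def InPZp (p : ℕ) [Fact p.Prime] (a : ℚ) : Prop := ∃ u ∈ zpLocal p, a = p * u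

theorem IsZpUnit.neg {p : ℕ} {a : ℚ} (h : IsZpUnit p a) : IsZpUnit p (-a) :=
  ⟨neg_ne_zero.mpr h.1, by rw [padicValRat.neg, h.2]⟩

theorem isZpUnit_one {p : ℕ} : IsZpUnit p 1 := ⟨one_ne_zero, padicValRat.one⟩

section LocalInteger

variable {p : ℕ} [hp : Fact p.Prime] {a b : ℚ}

theorem mem_zpLocal : a ∈ zpLocal p ↔ ¬ p ∣ a.den := Iff.rfl

theorem mem_zpLocal_iff_padicValRat : a ∈ zpLocal p ↔ 0 ≤ padicValRat p a := by
  rw [mem_zpLocal, padicValRat_def]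
  constructor
  · intro h
    simp [padicValNat.eq_zero_of_not_dvd h]
  · intro h hden
    have hnum : ¬ (p : ℤ) ∣ a.num := fun hnum =>
      hp.out.ne_one (Nat.eq_one_of_dvd_coprimes a.reduced (Int.natCast_dvd.mp hnum) hden)
    rw [padicValInt.eq_zero_of_not_dvd hnum] at h
    have := one_le_padicValNat_of_dvd a.den_nz hden
    omega

theorem prime_cast_ne_zero : (p : ℚ) ≠ 0 := Nat.cast_ne_zero.mpr hp.out.ne_zero

theorem zpow_mem_zpLocal {m : ℤ} (hm : 0 ≤ m) : (p : ℚ) ^ m ∈ zpLocal p := by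
  lift m to ℕ using hm
  exact Subring.pow_mem _ (natCast_mem _ p) m

theorem IsZpUnit.mem_zpLocal (h : IsZpUnit p a) : a ∈ zpLocal p :=
  mem_zpLocal_iff_padicValRat.mpr h.2.ge

theorem IsZpUnit.inv (h : IsZpUnit p a) : IsZpUnit p a⁻¹ :=
  ⟨inv_ne_zero h.1, by rw [padicValRat.inv, h.2, neg_zero]⟩

theorem IsZpUnit.inv_mem_zpLocal (h : IsZpUnit p a) : a⁻¹ ∈ zpLocal p :=
  h.inv.mem_zpLocal

theorem IsZpUnit.mul (ha : IsZpUnit p a) (hb : IsZpUnit p b) : IsZpUnit p (a * b) :=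
  ⟨mul_ne_zero ha.1 hb.1, by rw [padicValRat.mul ha.1 hb.1, ha.2, hb.2, add_zero]⟩

theorem inPZp_zero : InPZp p 0 := ⟨0, zero_mem _, (mul_zero _).symm⟩

theorem inPZp_of_one_le_padicValRat (ha : a ≠ 0) (hv : 1 ≤ padicValRat p a) : InPZp p a := by
  refine ⟨a / p, ?_, (mul_div_cancel₀ a prime_cast_ne_zero).symm⟩
  rw [mem_zpLocal_iff_padicValRat, padicValRat.div ha prime_cast_ne_zero,
    padicValRat.self hp.out.one_lt]
  omega

theorem InPZp.mem_zpLocal (h : InPZp p a) : a ∈ zpLocal p := by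
  obtain ⟨u, hu, rfl⟩ := h
  exact mul_mem (natCast_mem _ p) hu

theorem InPZp.add (ha : InPZp p a) (hb : InPZp p b) : InPZp p (a + b) := by
  obtain ⟨u, hu, rfl⟩ := ha
  obtain ⟨v, hv, rfl⟩ := hb
  exact ⟨u + v, add_mem hu hv, by ring⟩

theorem InPZp.neg (ha : InPZp p a) : InPZp p (-a) := by
  obtain ⟨u, hu, rfl⟩ := ha
  exact ⟨-u, neg_mem hu, by ring⟩

theorem InPZp.sub (ha : InPZp p a) (hb : InPZp p b) : InPZp p (a - b) := by
  simpa only [sub_eq_add_neg] using ha.add hb.neg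

theorem IsZpUnit.not_inPZp (h : IsZpUnit p a) : ¬ InPZp p a := by
  rintro ⟨u, hu, rfl⟩
  have hu0 : u ≠ 0 := right_ne_zero_of_mul h.1
  have := mem_zpLocal_iff_padicValRat.mp hu
  have h2 := h.2
  rw [padicValRat.mul prime_cast_ne_zero hu0, padicValRat.self hp.out.one_lt] at h2
  omega

theorem inPZp_or_isZpUnit (ha : a ∈ zpLocal p) : InPZp p a ∨ IsZpUnit p a := by
  rcases eq_or_ne a 0 with rfl | h0
  · exact Or.inl inPZp_zero
  · rcases (mem_zpLocal_iff_padicValRat.mp ha).eq_or_lt with h | h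
    · exact Or.inr ⟨h0, h.symm⟩
    · exact Or.inl (inPZp_of_one_le_padicValRat h0 h)

theorem IsZpUnit.add_inPZp (ha : IsZpUnit p a) (hb : InPZp p b) : IsZpUnit p (a + b) :=
  (inPZp_or_isZpUnit (add_mem ha.mem_zpLocal hb.mem_zpLocal)).resolve_left fun h =>
    ha.not_inPZp (by simpa using h.sub hb)

theorem inPZp_inv_of_not_mem_zpLocal (ha : a ∉ zpLocal p) : InPZp p a⁻¹ := by
  have h0 : a ≠ 0 := by rintro rfl; exact ha (zero_mem _)
  refine inPZp_of_one_le_padicValRat (inv_ne_zero h0) ?_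
  rw [mem_zpLocal_iff_padicValRat] at ha
  rw [padicValRat.inv]
  omega

/-- Scaling by the inverse of an entry of least valuation. -/
theorem exists_mul_mem_zpLocal {ι : Type*} [Finite ι] (g : ι → ℚ) (hg : ∃ i, g i ≠ 0) :
    ∃ μ : ℚ, μ ≠ 0 ∧ (∀ i, μ * g i ∈ zpLocal p) ∧ ∃ i, IsZpUnit p (μ * g i) := by
  obtain ⟨i₀, hi₀, hmin⟩ := Set.Finite.exists_minimalFor (fun i => padicValRat p (g i))
    {i | g i ≠ 0} (Set.toFinite _) hg
  refine ⟨(g i₀)⁻¹, inv_ne_zero hi₀, fun i => ?_, i₀, by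
    rw [inv_mul_cancel₀ hi₀]; exact isZpUnit_one⟩
  rcases eq_or_ne (g i) 0 with h0 | h0
  · simp [h0]
  rw [mem_zpLocal_iff_padicValRat, padicValRat.mul (inv_ne_zero hi₀) h0, padicValRat.inv]
  have : padicValRat p (g i₀) ≤ padicValRat p (g i) := (le_total _ _).elim id (hmin h0)
  omega

end LocalInteger

section Lattice

variable {V : Type*} [AddCommGroup V] [Module ℚ V]

theorem pSMul_mono {p : ℕ} {B C : Set V} (h : C ⊆ B) : pSMul p C ⊆ pSMul p B := by
  rintro _ ⟨b, hb, rfl⟩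
  exact ⟨b, h hb, rfl⟩

/-- The properties of a full `ℤ_(p)`-lattice used here; `bddBelow` is the discreteness that comes
from finite generation. -/
structure ZpLattice (p : ℕ) [Fact p.Prime] (B : Set V) : Prop where
  zero_mem : (0 : V) ∈ B
  add_mem {x y : V} : x ∈ B → y ∈ B → x + y ∈ B
  smul_mem {c : ℚ} {x : V} : c ∈ zpLocal p → x ∈ B → c • x ∈ B
  span_eq_top : Submodule.span ℚ B = ⊤
  bddBelow (x : V) : x ≠ 0 → BddBelow {m : ℤ | (p : ℚ) ^ m • x ∈ B}

namespace ZpLattice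

variable {p : ℕ} [Fact p.Prime] {B : Set V} (hB : ZpLattice p B) {x y : V} {c : ℚ}

theorem inv_smul_mem_of_mem_pSMul (hx : x ∈ pSMul p B) : (p : ℚ)⁻¹ • x ∈ B := by
  obtain ⟨b, hb, rfl⟩ := hx
  rwa [inv_smul_smul₀ prime_cast_ne_zero]

include hB

theorem sum_mem {ι : Type*} (s : Finset ι) {g : ι → V} (h : ∀ i ∈ s, g i ∈ B) :
    ∑ i ∈ s, g i ∈ B :=
  Finset.sum_induction g (· ∈ B) (fun _ _ => hB.add_mem) hB.zero_mem h

theorem pSMul_subset : pSMul p B ⊆ B := by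
  rintro _ ⟨b, hb, rfl⟩
  exact hB.smul_mem (natCast_mem _ p) hb

theorem zero_mem_pSMul : (0 : V) ∈ pSMul p B := ⟨0, hB.zero_mem, (smul_zero _).symm⟩

theorem add_mem_pSMul (hx : x ∈ pSMul p B) (hy : y ∈ pSMul p B) : x + y ∈ pSMul p B := by
  obtain ⟨a, ha, rfl⟩ := hx
  obtain ⟨b, hb, rfl⟩ := hy
  exact ⟨a + b, hB.add_mem ha hb, (smul_add _ _ _).symm⟩

theorem smul_mem_pSMul (hc : c ∈ zpLocal p) (hx : x ∈ pSMul p B) : c • x ∈ pSMul p B := by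
  obtain ⟨a, ha, rfl⟩ := hx
  exact ⟨c • a, hB.smul_mem hc ha, smul_comm _ _ _⟩

theorem sub_mem_pSMul (hx : x ∈ pSMul p B) (hy : y ∈ pSMul p B) : x - y ∈ pSMul p B := by
  simpa [sub_eq_add_neg] using
    hB.add_mem_pSMul hx (hB.smul_mem_pSMul (intCast_mem _ (-1)) hy)

theorem smul_mem_pSMul_of_inPZp (hc : InPZp p c) (hx : x ∈ B) : c • x ∈ pSMul p B := by
  obtain ⟨u, hu, rfl⟩ := hc
  exact ⟨u • x, hB.smul_mem hu hx, (mul_smul _ _ _)⟩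

theorem ne_zero_of_not_mem_pSMul (hx : x ∉ pSMul p B) : x ≠ 0 := by
  rintro rfl
  exact hx hB.zero_mem_pSMul

theorem mem_zpLocal_of_smul_mem (hx : x ∈ B \ pSMul p B) (h : c • x ∈ B) : c ∈ zpLocal p := by
  by_contra hc
  have hc0 : c ≠ 0 := by rintro rfl; exact hc (zpLocal p).zero_mem
  apply hx.2
  simpa [smul_smul, inv_mul_cancel₀ hc0] using
    hB.smul_mem_pSMul_of_inPZp (inPZp_inv_of_not_mem_zpLocal hc) h

theorem inPZp_of_smul_mem_pSMul (hx : x ∈ B \ pSMul p B) (h : c • x ∈ pSMul p B) :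
    InPZp p c := by
  refine ⟨(p : ℚ)⁻¹ * c, hB.mem_zpLocal_of_smul_mem hx ?_, ?_⟩
  · simpa [mul_smul] using inv_smul_mem_of_mem_pSMul h
  · rw [mul_inv_cancel_left₀ prime_cast_ne_zero]

theorem isZpUnit_of_smul_mem (hx : x ∈ B \ pSMul p B) (h : c • x ∈ B \ pSMul p B) :
    IsZpUnit p c :=
  (inPZp_or_isZpUnit (hB.mem_zpLocal_of_smul_mem hx h.1)).resolve_left fun hc =>
    h.2 (hB.smul_mem_pSMul_of_inPZp hc hx.1)

theorem smul_mem_iff_of_isZpUnit (hc : IsZpUnit p c) : c • x ∈ B ↔ x ∈ B :=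
  ⟨fun h => by simpa [smul_smul, inv_mul_cancel₀ hc.1] using hB.smul_mem hc.inv_mem_zpLocal h,
    hB.smul_mem hc.mem_zpLocal⟩

theorem smul_mem_pSMul_iff_of_isZpUnit (hc : IsZpUnit p c) :
    c • x ∈ pSMul p B ↔ x ∈ pSMul p B :=
  ⟨fun h => by
    simpa [smul_smul, inv_mul_cancel₀ hc.1] using hB.smul_mem_pSMul hc.inv_mem_zpLocal h,
    hB.smul_mem_pSMul hc.mem_zpLocal⟩

theorem smul_mem_diff_iff_of_isZpUnit (hc : IsZpUnit p c) :
    c • x ∈ B \ pSMul p B ↔ x ∈ B \ pSMul p B := by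
  rw [Set.mem_sdiff, Set.mem_sdiff, hB.smul_mem_iff_of_isZpUnit hc,
    hB.smul_mem_pSMul_iff_of_isZpUnit hc]

theorem zpow_smul_mem_of_le {m n : ℤ} (h : (p : ℚ) ^ m • x ∈ B) (hmn : m ≤ n) :
    (p : ℚ) ^ n • x ∈ B := by
  have := hB.smul_mem (zpow_mem_zpLocal (sub_nonneg.mpr hmn)) h
  rwa [smul_smul, ← zpow_add₀ prime_cast_ne_zero, sub_add_cancel] at this

theorem exists_zpow_smul_mem (x : V) : ∃ m : ℤ, (p : ℚ) ^ m • x ∈ B := by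
  have hspan : x ∈ Submodule.span ℚ B := hB.span_eq_top ▸ Submodule.mem_top
  obtain ⟨μ, hμ0, hμ, hμx⟩ : ∃ μ : ℚ, μ ≠ 0 ∧ μ ∈ zpLocal p ∧ μ • x ∈ B := by
    induction hspan using Submodule.span_induction with
    | mem x hx => exact ⟨1, one_ne_zero, one_mem _, by rwa [one_smul]⟩
    | zero => exact ⟨1, one_ne_zero, one_mem _, by rw [smul_zero]; exact hB.zero_mem⟩
    | add x y _ _ hx hy =>
      obtain ⟨μ, hμ0, hμ, hμx⟩ := hx
      obtain ⟨ν, hν0, hν, hνy⟩ := hy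
      refine ⟨μ * ν, mul_ne_zero hμ0 hν0, mul_mem hμ hν, ?_⟩
      rw [smul_add, mul_comm, mul_smul, mul_comm, mul_smul]
      exact hB.add_mem (hB.smul_mem hν hμx) (hB.smul_mem hμ hνy)
    | smul a x _ hx =>
      obtain ⟨μ, hμ0, hμ, hμx⟩ := hx
      refine ⟨a.den * μ, mul_ne_zero (Nat.cast_ne_zero.mpr a.den_nz) hμ0,
        mul_mem (natCast_mem _ _) hμ, ?_⟩
      rw [smul_smul, mul_right_comm, Rat.den_mul_eq_num, mul_smul]
      exact hB.smul_mem (intCast_mem _ _) hμx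
  refine ⟨padicValRat p μ, ?_⟩
  have hunit : IsZpUnit p ((p : ℚ) ^ padicValRat p μ * μ⁻¹) := by
    refine ⟨mul_ne_zero (zpow_ne_zero _ prime_cast_ne_zero) (inv_ne_zero hμ0), ?_⟩
    rw [padicValRat.mul (zpow_ne_zero _ prime_cast_ne_zero) (inv_ne_zero hμ0),
      padicValRat.zpow, padicValRat.self (Fact.out : p.Prime).one_lt, padicValRat.inv]
    ring
  simpa [smul_smul, mul_assoc, inv_mul_cancel₀ hμ0] using hB.smul_mem hunit.mem_zpLocal hμx

theorem exists_smul_mem_diff (hx : x ≠ 0) : ∃ c : ℚ, c ≠ 0 ∧ c • x ∈ B \ pSMul p B := by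
  obtain ⟨m, hm, hleast⟩ := Int.exists_least_of_bdd (hB.bddBelow x hx) (hB.exists_zpow_smul_mem x)
  refine ⟨(p : ℚ) ^ m, zpow_ne_zero _ prime_cast_ne_zero, hm, fun hmem => ?_⟩
  have h := inv_smul_mem_of_mem_pSMul hmem
  rw [smul_smul, ← zpow_neg_one, ← zpow_add₀ prime_cast_ne_zero, neg_add_eq_sub] at h
  have := hleast (m - 1) h
  omega

end ZpLattice

end Lattice

section SpanLattice

variable {p : ℕ} [Fact p.Prime] {ι : Type*} [Fintype ι]

theorem exists_mul_apply_mem_zpLocal_of_mem_zpSpanV (s : Finset (ι → ℚ)) :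
    ∃ μ : ℚ, μ ≠ 0 ∧ ∀ b ∈ zpSpanV p s, ∀ i, μ * b i ∈ zpLocal p := by
  obtain ⟨μ, hμ0, hμ⟩ : ∃ μ : ℚ, μ ≠ 0 ∧ ∀ t ∈ s, ∀ i, μ * t i ∈ zpLocal p := by
    by_cases h : ∃ ti : s × ι, ti.1.1 ti.2 ≠ 0
    · obtain ⟨μ, hμ0, hμ, -⟩ := exists_mul_mem_zpLocal (p := p) (fun ti : s × ι => ti.1.1 ti.2) h
      exact ⟨μ, hμ0, fun t ht i => hμ (⟨t, ht⟩, i)⟩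
    · push Not at h
      refine ⟨1, one_ne_zero, fun t ht i => ?_⟩
      rw [one_mul, show t i = 0 from h (⟨t, ht⟩, i)]
      exact zero_mem _
  refine ⟨μ, hμ0, ?_⟩
  rintro _ ⟨f, hf, rfl⟩ i
  simp only [Finset.sum_apply, Pi.smul_apply, smul_eq_mul, Finset.mul_sum]
  exact Subring.sum_mem _ fun t ht => by
    rw [mul_left_comm]; exact mul_mem (hf t : f t ∈ zpLocal p) (hμ t ht i)

theorem IsZpLatIn.zpLattice {B : Set (ι → ℚ)} (h : IsZpLatIn p ⊤ B) : ZpLattice p B := by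
  obtain ⟨⟨s, rfl⟩, hspan⟩ := h
  obtain ⟨μ, hμ0, hμ⟩ := exists_mul_apply_mem_zpLocal_of_mem_zpSpanV (p := p) s
  refine
    { zero_mem := ⟨0, fun _ => (zpLocal p).zero_mem, by simp⟩
      add_mem := ?_
      smul_mem := ?_
      span_eq_top := hspan
      bddBelow := ?_ }
  · rintro _ _ ⟨f, hf, rfl⟩ ⟨g, hg, rfl⟩
    exact ⟨f + g, fun t => (add_mem (hf t) (hg t) : f t + g t ∈ zpLocal p),
      by simp [add_smul, Finset.sum_add_distrib]⟩
  · rintro c _ hc ⟨f, hf, rfl⟩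
    exact ⟨fun t => c * f t, fun t => (mul_mem hc (hf t) : c * f t ∈ zpLocal p),
      by simp [Finset.smul_sum, mul_smul]⟩
  · intro x hx
    obtain ⟨i, hi⟩ : ∃ i, x i ≠ 0 := Function.ne_iff.mp hx
    refine ⟨-padicValRat p μ - padicValRat p (x i), fun m hm => ?_⟩
    have hpm : (p : ℚ) ^ m ≠ 0 := zpow_ne_zero _ prime_cast_ne_zero
    have := mem_zpLocal_iff_padicValRat.mp (hμ _ hm i)
    rw [Pi.smul_apply, smul_eq_mul, padicValRat.mul hμ0 (mul_ne_zero hpm hi), padicValRat.mul hpm hi,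
      padicValRat.zpow, padicValRat.self (Fact.out : p.Prime).one_lt] at this
    linarith

end SpanLattice

namespace ZpRelV

variable {V : Type*} [AddCommGroup V] [Module ℚ V] {p : ℕ} {B : Set V} {x y z : V} {a b c : ℚ}

theorem intro (ha : a ≠ 0) (hb : b ≠ 0) (hx : a • x ∈ B \ pSMul p B) (hy : b • y ∈ B \ pSMul p B)
    (h : a • x - b • y ∈ pSMul p B) : ZpRelV p B x y :=
  ⟨a • x, b • y, ⟨a, ha, rfl⟩, ⟨b, hb, rfl⟩, hx.1, hx.2, hy.1, hy.2, h⟩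

theorem of_sub_mem (hx : x ∈ B \ pSMul p B) (hy : y ∈ B \ pSMul p B) (h : x - y ∈ pSMul p B) :
    ZpRelV p B x y :=
  intro one_ne_zero one_ne_zero (by rwa [one_smul]) (by rwa [one_smul]) (by simpa using h)

theorem smul_left (hc : c ≠ 0) (h : ZpRelV p B x y) : ZpRelV p B (c • x) y := by
  obtain ⟨_, y', ⟨a, ha, rfl⟩, hy', h⟩ := h
  refine ⟨_, y', ⟨a * c⁻¹, mul_ne_zero ha (inv_ne_zero hc), rfl⟩, hy', ?_⟩
  rwa [smul_smul, inv_mul_cancel_right₀ hc]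

theorem smul_left_iff (hc : c ≠ 0) : ZpRelV p B (c • x) y ↔ ZpRelV p B x y :=
  ⟨fun h => by simpa [smul_smul, inv_mul_cancel₀ hc] using h.smul_left (inv_ne_zero hc),
    smul_left hc⟩

variable [Fact p.Prime]

theorem refl (hB : ZpLattice p B) (hx : x ≠ 0) : ZpRelV p B x x := by
  obtain ⟨c, hc0, hc⟩ := hB.exists_smul_mem_diff hx
  exact intro hc0 hc0 hc hc (by rw [sub_self]; exact hB.zero_mem_pSMul)

theorem symm (hB : ZpLattice p B) (h : ZpRelV p B x y) : ZpRelV p B y x := by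
  obtain ⟨_, _, ⟨a, ha, rfl⟩, ⟨b, hb, rfl⟩, h1, h2, h3, h4, h5⟩ := h
  refine intro hb ha ⟨h3, h4⟩ ⟨h1, h2⟩ ?_
  simpa using hB.smul_mem_pSMul (intCast_mem _ (-1)) h5

theorem smul_right_iff (hB : ZpLattice p B) (hc : c ≠ 0) :
    ZpRelV p B x (c • y) ↔ ZpRelV p B x y :=
  ⟨fun h => ((smul_left_iff hc).mp (h.symm hB)).symm hB,
    fun h => ((smul_left_iff hc).mpr (h.symm hB)).symm hB⟩

theorem iff_exists_isZpUnit (hB : ZpLattice p B) (hx : x ∈ B \ pSMul p B)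
    (hy : y ∈ B \ pSMul p B) :
    ZpRelV p B x y ↔ ∃ t : ℚ, IsZpUnit p t ∧ x - t • y ∈ pSMul p B := by
  constructor
  · rintro ⟨_, _, ⟨a, ha, rfl⟩, ⟨b, hb, rfl⟩, h1, h2, h3, h4, h5⟩
    have hua : IsZpUnit p a := hB.isZpUnit_of_smul_mem hx ⟨h1, h2⟩
    refine ⟨a⁻¹ * b, hua.inv.mul (hB.isZpUnit_of_smul_mem hy ⟨h3, h4⟩), ?_⟩
    convert hB.smul_mem_pSMul hua.inv_mem_zpLocal h5 using 1
    rw [smul_sub, smul_smul, smul_smul, inv_mul_cancel₀ ha, one_smul]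
  · rintro ⟨t, ht, h⟩
    exact intro one_ne_zero ht.1 (by rwa [one_smul]) ((hB.smul_mem_diff_iff_of_isZpUnit ht).mpr hy)
      (by rwa [one_smul])

theorem trans (hB : ZpLattice p B) (h₁ : ZpRelV p B x y) (h₂ : ZpRelV p B y z) :
    ZpRelV p B x z := by
  obtain ⟨_, _, ⟨a, ha, rfl⟩, ⟨b, hb, rfl⟩, h1, h2, h3, h4, h5⟩ := h₁
  obtain ⟨_, _, ⟨b', hb', rfl⟩, ⟨c, hc, rfl⟩, h1', h2', h3', h4', h5'⟩ := h₂
  have hu : IsZpUnit p (b / b') :=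
    hB.isZpUnit_of_smul_mem ⟨h1', h2'⟩ (by rw [smul_smul, div_mul_cancel₀ _ hb']; exact ⟨h3, h4⟩)
  refine intro ha (mul_ne_zero hu.1 hc) ⟨h1, h2⟩ ?_ ?_
  · rw [← smul_smul]
    exact (hB.smul_mem_diff_iff_of_isZpUnit hu).mpr ⟨h3', h4'⟩
  · have : a • x - (b / b' * c) • z = (a • x - b • y) + (b / b') • (b' • y - c • z) := by
      rw [smul_sub, smul_smul, smul_smul, div_mul_cancel₀ _ hb']
      abel
    rw [this]
    exact hB.add_mem_pSMul h5 (hB.smul_mem_pSMul hu.mem_zpLocal h5')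

theorem of_add_left (hB : ZpLattice p B) (hz : z ∈ B \ pSMul p B) (hy : y ∈ B \ pSMul p B)
    (h : ZpRelV p B (z + y) z) : ZpRelV p B y z := by
  rw [iff_exists_isZpUnit hB hy hz]
  by_cases hzy : z + y ∈ pSMul p B
  · exact ⟨-1, isZpUnit_one.neg, by simpa [add_comm] using hzy⟩
  obtain ⟨t, ht, hsub⟩ := (iff_exists_isZpUnit hB ⟨hB.add_mem hz.1 hy.1, hzy⟩ hz).mp h
  have hsub' : y - (t - 1) • z ∈ pSMul p B := by convert hsub using 1; module
  refine ⟨t - 1, (inPZp_or_isZpUnit ((zpLocal p).sub_mem ht.mem_zpLocal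
    (zpLocal p).one_mem)).resolve_left fun hpt => hy.2 ?_, hsub'⟩
  simpa using hB.add_mem_pSMul hsub' (hB.smul_mem_pSMul_of_inPZp hpt hz.1)

end ZpRelV

/-- `ρ_B(x)` lies on the residue line `l̄` through `q̄` and `w̄`. -/
def ReducesIntoLine {V : Type*} [AddCommGroup V] [Module ℚ V] (p : ℕ) (B : Set V) (q w x : V) :
    Prop :=
  ∃ c : ℚ, c ≠ 0 ∧ c • x ∈ resLineV p B q w \ pSMul p B

namespace ZpLattice

variable {V : Type*} [AddCommGroup V] [Module ℚ V] {p : ℕ} [Fact p.Prime] {B : Set V}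
  (hB : ZpLattice p B) {q w x y : V} {a b c s t : ℚ}

theorem smul_add_smul_add_mem_resLineV (ha : a ∈ zpLocal p) (hb : b ∈ zpLocal p)
    (hy : y ∈ pSMul p B) : a • q + b • w + y ∈ resLineV p B q w :=
  ⟨a, b, ha, hb, y, hy, rfl⟩

theorem pSMul_subset_resLineV : pSMul p B ⊆ resLineV p B q w := fun y hy => by
  simpa using
    smul_add_smul_add_mem_resLineV (q := q) (w := w) (zpLocal p).zero_mem (zpLocal p).zero_mem hy

include hB

theorem smul_add_smul_mem_resLineV (ha : a ∈ zpLocal p) (hb : b ∈ zpLocal p) :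
    a • q + b • w ∈ resLineV p B q w := by
  simpa using smul_add_smul_add_mem_resLineV ha hb hB.zero_mem_pSMul

theorem right_mem_resLineV : w ∈ resLineV p B q w := by
  simpa using hB.smul_add_smul_mem_resLineV (q := q) (w := w) (zpLocal p).zero_mem (zpLocal p).one_mem

theorem resLineV_subset (hq : q ∈ B) (hw : w ∈ B) : resLineV p B q w ⊆ B := by
  rintro _ ⟨a, b, ha, hb, y, hy, rfl⟩
  exact hB.add_mem (hB.add_mem (hB.smul_mem ha hq) (hB.smul_mem hb hw)) (hB.pSMul_subset hy)

theorem add_mem_resLineV (hx : x ∈ resLineV p B q w) (hy : y ∈ resLineV p B q w) :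
    x + y ∈ resLineV p B q w := by
  obtain ⟨a, b, ha, hb, u, hu, rfl⟩ := hx
  obtain ⟨a', b', ha', hb', u', hu', rfl⟩ := hy
  refine ⟨a + a', b + b', (zpLocal p).add_mem ha ha', (zpLocal p).add_mem hb hb', u + u',
    hB.add_mem_pSMul hu hu', ?_⟩
  module

theorem smul_mem_resLineV (hc : c ∈ zpLocal p) (hx : x ∈ resLineV p B q w) :
    c • x ∈ resLineV p B q w := by
  obtain ⟨a, b, ha, hb, u, hu, rfl⟩ := hx
  refine ⟨c * a, c * b, mul_mem hc ha, mul_mem hc hb, c • u, hB.smul_mem_pSMul hc hu, ?_⟩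
  module

theorem inPZp_of_smul_add_smul_mem_pSMul (hx : x ∈ B \ pSMul p B) (hy : y ∈ B \ pSMul p B)
    (hxy : ¬ ZpRelV p B x y) (ha : a ∈ zpLocal p) (hb : b ∈ zpLocal p)
    (h : a • x + b • y ∈ pSMul p B) : InPZp p a ∧ InPZp p b := by
  rcases inPZp_or_isZpUnit ha with hpa | hua
  · refine ⟨hpa, hB.inPZp_of_smul_mem_pSMul hy ?_⟩
    simpa using hB.sub_mem_pSMul h (hB.smul_mem_pSMul_of_inPZp hpa hx.1)
  · exfalso
    have hx' : x - (-(a⁻¹ * b)) • y ∈ pSMul p B := by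
      convert hB.smul_mem_pSMul hua.inv_mem_zpLocal h using 1
      rw [smul_add, smul_smul, smul_smul, inv_mul_cancel₀ hua.1, one_smul, neg_smul, sub_neg_eq_add]
    rcases inPZp_or_isZpUnit ((zpLocal p).neg_mem (mul_mem hua.inv_mem_zpLocal hb)) with hpc | huc
    · refine hx.2 ?_
      convert hB.add_mem_pSMul hx' (hB.smul_mem_pSMul_of_inPZp hpc hy.1) using 1
      abel
    · exact hxy ((ZpRelV.iff_exists_isZpUnit hB hx hy).mpr ⟨_, huc, hx'⟩)

theorem inPZp_of_smul_add_smul_add_smul_mem_pSMul (hq : q ∈ B \ pSMul p B)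
    (hw : w ∈ B \ pSMul p B) (hqw : ¬ ZpRelV p B q w) (hx : x ∈ B) (hxl : x ∉ resLineV p B q w)
    (ha : a ∈ zpLocal p) (hb : b ∈ zpLocal p) (hc : c ∈ zpLocal p)
    (h : a • q + b • w + c • x ∈ pSMul p B) : InPZp p a ∧ InPZp p b ∧ InPZp p c := by
  rcases inPZp_or_isZpUnit hc with hpc | huc
  · have hqw' : a • q + b • w ∈ pSMul p B := by
      simpa using hB.sub_mem_pSMul h (hB.smul_mem_pSMul_of_inPZp hpc hx)
    exact ⟨(hB.inPZp_of_smul_add_smul_mem_pSMul hq hw hqw ha hb hqw').1,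
      (hB.inPZp_of_smul_add_smul_mem_pSMul hq hw hqw ha hb hqw').2, hpc⟩
  · refine absurd ?_ hxl
    have hmem := smul_add_smul_add_mem_resLineV (q := q) (w := w)
      ((zpLocal p).neg_mem (mul_mem huc.inv_mem_zpLocal ha))
      ((zpLocal p).neg_mem (mul_mem huc.inv_mem_zpLocal hb))
      (hB.smul_mem_pSMul huc.inv_mem_zpLocal h)
    convert hmem using 1
    rw [smul_add, smul_add, smul_smul, smul_smul, smul_smul, inv_mul_cancel₀ huc.1]
    module

theorem smul_add_smul_mem_line_not_rel (hq : q ∈ B \ pSMul p B) (hw : w ∈ B \ pSMul p B)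
    (hqw : ¬ ZpRelV p B q w) (ha : a ∈ zpLocal p) (hb : IsZpUnit p b) :
    a • q + b • w ∈ resLineV p B q w \ pSMul p B ∧ ¬ ZpRelV p B (a • q + b • w) q := by
  have hnot : a • q + b • w ∉ pSMul p B := fun h =>
    hb.not_inPZp (hB.inPZp_of_smul_add_smul_mem_pSMul hq hw hqw ha hb.mem_zpLocal h).2
  have hmem := hB.smul_add_smul_mem_resLineV (q := q) (w := w) ha hb.mem_zpLocal
  refine ⟨⟨hmem, hnot⟩, fun hrel => ?_⟩
  obtain ⟨t, ht, hsub⟩ :=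
    (ZpRelV.iff_exists_isZpUnit hB ⟨hB.resLineV_subset hq.1 hw.1 hmem, hnot⟩ hq).mp hrel
  refine hb.not_inPZp (hB.inPZp_of_smul_add_smul_mem_pSMul hq hw hqw
    ((zpLocal p).sub_mem ha ht.mem_zpLocal) hb.mem_zpLocal ?_).2
  convert hsub using 1
  module

theorem smul_mem_resLineV_of_smul_mem_resLineV (hq : q ∈ B) (hw : w ∈ B)
    (h : a • x ∈ resLineV p B q w \ pSMul p B) (hc : c • x ∈ B \ pSMul p B) :
    c • x ∈ resLineV p B q w := by
  have ha : a ≠ 0 := by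
    rintro rfl
    rw [zero_smul] at h
    exact h.2 hB.zero_mem_pSMul
  have hu : IsZpUnit p (c / a) :=
    hB.isZpUnit_of_smul_mem ⟨hB.resLineV_subset hq hw h.1, h.2⟩
      (by rwa [smul_smul, div_mul_cancel₀ _ ha])
  simpa [smul_smul, div_mul_cancel₀ _ ha] using hB.smul_mem_resLineV hu.mem_zpLocal h.1

theorem reducesIntoLine_of_rel (hq : q ∈ B \ pSMul p B) (h : ZpRelV p B x q) :
    ReducesIntoLine p B q w x := by
  obtain ⟨_, _, ⟨a, ha, rfl⟩, ⟨b, hb, rfl⟩, h1, h2, h3, h4, h5⟩ := h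
  have hu : IsZpUnit p b := hB.isZpUnit_of_smul_mem hq ⟨h3, h4⟩
  refine ⟨a, ha, ?_, h2⟩
  simpa using hB.add_mem_resLineV
    (hB.smul_add_smul_mem_resLineV (q := q) (w := w) hu.mem_zpLocal ((zpLocal p).zero_mem))
    (pSMul_subset_resLineV h5)

theorem reducesIntoLine_iff_mem (hq : q ∈ B) (hw : w ∈ B) (hx : x ∈ B \ pSMul p B) :
    ReducesIntoLine p B q w x ↔ x ∈ resLineV p B q w :=
  ⟨fun ⟨_, _, h⟩ => by
    simpa using hB.smul_mem_resLineV_of_smul_mem_resLineV hq hw h (c := 1) (by rwa [one_smul]),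
    fun h => ⟨1, one_ne_zero, by rw [one_smul]; exact ⟨h, hx.2⟩⟩⟩

theorem reducesIntoLine_smul_add_smul (hq : q ∈ B) (hw : w ∈ B) (hx : ReducesIntoLine p B q w x)
    (hy : ReducesIntoLine p B q w y) (hxy : ¬ ZpRelV p B x y) (h0 : s • x + t • y ≠ 0) :
    ReducesIntoLine p B q w (s • x + t • y) := by
  obtain ⟨a, ha0, hax⟩ := hx
  obtain ⟨b, hb0, hby⟩ := hy
  have hX : a • x ∈ B \ pSMul p B := ⟨hB.resLineV_subset hq hw hax.1, hax.2⟩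
  have hY : b • y ∈ B \ pSMul p B := ⟨hB.resLineV_subset hq hw hby.1, hby.2⟩
  have hXY : ¬ ZpRelV p B (a • x) (b • y) := by
    rwa [ZpRelV.smul_left_iff ha0, ZpRelV.smul_right_iff hB hb0]
  obtain ⟨μ, hμ0, hμ, j, hj⟩ := exists_mul_mem_zpLocal (p := p) ![s / a, t / b] <| by
    by_contra! h
    refine h0 ?_
    simp_all [Fin.forall_fin_two]
  have heq : μ • (s • x + t • y) = (μ * (s / a)) • (a • x) + (μ * (t / b)) • (b • y) := by
    rw [smul_smul, smul_smul, mul_assoc, mul_assoc, div_mul_cancel₀ _ ha0,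
      div_mul_cancel₀ _ hb0, smul_add, smul_smul, smul_smul]
  refine ⟨μ, hμ0, ?_, fun hmem => ?_⟩
  · rw [heq]
    exact hB.add_mem_resLineV (hB.smul_mem_resLineV (hμ 0) hax.1)
      (hB.smul_mem_resLineV (hμ 1) hby.1)
  · rw [heq] at hmem
    obtain ⟨h1, h2⟩ := hB.inPZp_of_smul_add_smul_mem_pSMul hX hY hXY (hμ 0) (hμ 1) hmem
    fin_cases j
    exacts [hj.not_inPZp h1, hj.not_inPZp h2]

/-- Four vectors of `V` are dependent; scaling a relation into `ℤ_(p)` with a unit coefficient,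
the independence of `q̄, w̄, x̄` makes the coefficient of `y` a unit, and then `ȳ ∉ l̄` makes that
of `x` one. -/
theorem exists_eq_smul_add_smul_add_smul [FiniteDimensional ℚ V] (hV : Module.finrank ℚ V ≤ 3)
    (hq : q ∈ B \ pSMul p B) (hw : w ∈ B \ pSMul p B) (hqw : ¬ ZpRelV p B q w)
    (hx : x ∈ B) (hxl : x ∉ resLineV p B q w) (hy : y ∈ B) (hyl : y ∉ resLineV p B q w) :
    ∃ a b c : ℚ, a ∈ zpLocal p ∧ b ∈ zpLocal p ∧ IsZpUnit p c ∧ y = a • q + b • w + c • x := by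
  have hdep : ¬ LinearIndependent ℚ ![y, q, w, x] := fun hli => by
    have := hli.fintype_card_le_finrank
    simp only [Fintype.card_fin] at this
    omega
  obtain ⟨g, hsum, i₀, hi₀⟩ := Fintype.not_linearIndependent_iff.mp hdep
  obtain ⟨μ, -, hμ, j, hj⟩ := exists_mul_mem_zpLocal (p := p) g ⟨i₀, hi₀⟩
  simp only [Fin.sum_univ_four, Matrix.cons_val] at hsum
  have hrest : (μ * g 1) • q + (μ * g 2) • w + (μ * g 3) • x = -((μ * g 0) • y) := by
    rw [eq_neg_iff_add_eq_zero, ← smul_eq_zero_of_right μ hsum]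
    module
  have hu : IsZpUnit p (μ * g 0) := by
    refine (inPZp_or_isZpUnit (hμ 0)).resolve_left fun hp0 => ?_
    obtain ⟨h1, h2, h3⟩ := hB.inPZp_of_smul_add_smul_add_smul_mem_pSMul hq hw hqw hx hxl
      (hμ 1) (hμ 2) (hμ 3) (hrest ▸ neg_smul (μ * g 0) y ▸ hB.smul_mem_pSMul_of_inPZp hp0.neg hy)
    fin_cases j
    exacts [hj.not_inPZp hp0, hj.not_inPZp h1, hj.not_inPZp h2, hj.not_inPZp h3]
  set k := (μ * g 0)⁻¹
  have hk : k ∈ zpLocal p := hu.inv_mem_zpLocal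
  have hyeq : y = (-(k * (μ * g 1))) • q + (-(k * (μ * g 2))) • w + (-(k * (μ * g 3))) • x := by
    have : y = -(k • -((μ * g 0) • y)) := by
      rw [smul_neg, neg_neg, smul_smul, inv_mul_cancel₀ hu.1, one_smul]
    rw [this, ← hrest]
    module
  refine ⟨_, _, _, (zpLocal p).neg_mem (mul_mem hk (hμ 1)), (zpLocal p).neg_mem (mul_mem hk (hμ 2)),
    ?_, hyeq⟩
  refine (inPZp_or_isZpUnit ((zpLocal p).neg_mem (mul_mem hk (hμ 3)))).resolve_left
    fun hp3 => hyl ?_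
  rw [hyeq]
  exact smul_add_smul_add_mem_resLineV ((zpLocal p).neg_mem (mul_mem hk (hμ 1)))
    ((zpLocal p).neg_mem (mul_mem hk (hμ 2))) (hB.smul_mem_pSMul_of_inPZp hp3 hx)

end ZpLattice

/-- `f` is induced via `B` from the flag map on `ℙ(B/pB)` with flag `q̄ ∈ l̄ = line(q̄, w̄)` and
values `a₁` off `l̄`, `a₂` on `l̄ ∖ {q̄}`, `a₃` at `q̄`. -/
structure IsInducedFlag {V A : Type*} [AddCommGroup V] [Module ℚ V]
    (f : Projectivization ℚ V → A) (p : ℕ) [Fact p.Prime] (B : Set V) (q w : V) (a₁ a₂ a₃ : A) :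
    Prop where
  lattice : ZpLattice p B
  q_mem : q ∈ B \ pSMul p B
  w_mem : w ∈ B \ pSMul p B
  not_rel : ¬ ZpRelV p B q w
  apply_off (x : V) (hx : x ≠ 0) :
    (∃ a : ℚ, a ≠ 0 ∧ a • x ∈ B \ pSMul p B ∧ a • x ∉ resLineV p B q w) →
      f (Projectivization.mk ℚ x hx) = a₁
  apply_line (x : V) (hx : x ≠ 0) :
    ReducesIntoLine p B q w x → ¬ ZpRelV p B x q → f (Projectivization.mk ℚ x hx) = a₂
  apply_point (x : V) (hx : x ≠ 0) : ZpRelV p B x q → f (Projectivization.mk ℚ x hx) = a₃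
  ne₁₂ : a₁ ≠ a₂
  ne₁₃ : a₁ ≠ a₃
  ne₂₃ : a₂ ≠ a₃

namespace IsInducedFlag

variable {V A : Type*} [AddCommGroup V] [Module ℚ V] {f : Projectivization ℚ V → A} {p : ℕ}
  [Fact p.Prime] {B : Set V} {q w x : V} {a₁ a₂ a₃ : A}
  (F : IsInducedFlag f p B q w a₁ a₂ a₃)
include F

theorem trichotomy (hx : x ≠ 0) :
    (f (Projectivization.mk ℚ x hx) = a₁ ∧ ¬ ReducesIntoLine p B q w x) ∨
      (f (Projectivization.mk ℚ x hx) = a₂ ∧ ReducesIntoLine p B q w x ∧ ¬ ZpRelV p B x q) ∨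
      (f (Projectivization.mk ℚ x hx) = a₃ ∧ ZpRelV p B x q) := by
  obtain ⟨c, hc0, hc⟩ := F.lattice.exists_smul_mem_diff hx
  have hline : ReducesIntoLine p B q w x ↔ c • x ∈ resLineV p B q w := by
    rw [← F.lattice.reducesIntoLine_iff_mem F.q_mem.1 F.w_mem.1 hc]
    exact ⟨fun ⟨d, hd0, hd⟩ =>
        ⟨d / c, div_ne_zero hd0 hc0, by rwa [smul_smul, div_mul_cancel₀ _ hc0]⟩,
      fun ⟨d, hd0, hd⟩ => ⟨d * c, mul_ne_zero hd0 hc0, by rwa [mul_smul]⟩⟩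
  by_cases hl : c • x ∈ resLineV p B q w
  · by_cases hrel : ZpRelV p B x q
    · exact Or.inr (Or.inr ⟨F.apply_point x hx hrel, hrel⟩)
    · exact Or.inr (Or.inl ⟨F.apply_line x hx (hline.mpr hl) hrel, hline.mpr hl, hrel⟩)
  · exact Or.inl ⟨F.apply_off x hx ⟨c, hc0, hc, hl⟩, mt hline.mp hl⟩

theorem apply_eq_a₃_iff (hx : x ≠ 0) : f (Projectivization.mk ℚ x hx) = a₃ ↔ ZpRelV p B x q := by
  refine ⟨fun h => ?_, F.apply_point x hx⟩
  rcases F.trichotomy hx with ⟨h', -⟩ | ⟨h', -⟩ | ⟨-, hrel⟩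
  exacts [(F.ne₁₃ (h'.symm.trans h)).elim, (F.ne₂₃ (h'.symm.trans h)).elim, hrel]

theorem apply_eq_a₂_iff (hx : x ≠ 0) :
    f (Projectivization.mk ℚ x hx) = a₂ ↔ ReducesIntoLine p B q w x ∧ ¬ ZpRelV p B x q := by
  refine ⟨fun h => ?_, fun h => F.apply_line x hx h.1 h.2⟩
  rcases F.trichotomy hx with ⟨h', -⟩ | ⟨-, hl⟩ | ⟨h', -⟩
  exacts [(F.ne₁₂ (h'.symm.trans h)).elim, hl, (F.ne₂₃ (h.symm.trans h')).elim]

theorem apply_eq_a₁_iff (hx : x ≠ 0) :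
    f (Projectivization.mk ℚ x hx) = a₁ ↔ ¬ ReducesIntoLine p B q w x := by
  rcases F.trichotomy hx with ⟨h, hl⟩ | ⟨h, hl, -⟩ | ⟨h, hrel⟩
  · exact iff_of_true h hl
  · exact iff_of_false (h ▸ F.ne₁₂.symm) (not_not.mpr hl)
  · exact iff_of_false (h ▸ F.ne₁₃.symm)
      (not_not.mpr (F.lattice.reducesIntoLine_of_rel F.q_mem hrel))

theorem reducesIntoLine_iff (hx : x ≠ 0) :
    ReducesIntoLine p B q w x ↔
      f (Projectivization.mk ℚ x hx) = a₂ ∨ f (Projectivization.mk ℚ x hx) = a₃ := by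
  rcases F.trichotomy hx with ⟨h, hl⟩ | ⟨h, hl, -⟩ | ⟨h, hrel⟩
  · exact iff_of_false hl (by rw [h]; exact not_or.mpr ⟨F.ne₁₂, F.ne₁₃⟩)
  · exact iff_of_true hl (Or.inl h)
  · exact iff_of_true (F.lattice.reducesIntoLine_of_rel F.q_mem hrel) (Or.inr h)

theorem reducesIntoLine_right : ReducesIntoLine p B q w w :=
  ⟨1, one_ne_zero, by rw [one_smul]; exact ⟨F.lattice.right_mem_resLineV, F.w_mem.2⟩⟩

theorem apply_right (hw : w ≠ 0) : f (Projectivization.mk ℚ w hw) = a₂ :=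
  F.apply_line w hw F.reducesIntoLine_right fun h => F.not_rel (h.symm F.lattice)

variable {B' : Set V} {q' w' y : V} {a₁' a₂' a₃' : A}
  (F' : IsInducedFlag f p B' q' w' a₁' a₂' a₃') (h₃ : a₃ = a₃') (hswap : a₂' = a₁)
include F' h₃ hswap

/-- If the roles of `a₁` and `a₂` were swapped between `B` and `B'`, the plane spanned by two points
of `l̄'` with distinct reductions would avoid the value `a₂`, so it cannot meet `l̄ ∖ {q̄}`. -/
theorem false_of_swap_of_eq_smul_add_smul (hx : ReducesIntoLine p B' q' w' x)
    (hy : ReducesIntoLine p B' q' w' y) (hxy : ¬ ZpRelV p B' x y) {a b s t : ℚ}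
    (ha : a ∈ zpLocal p) (hb : IsZpUnit p b) (h : a • q + b • w = s • x + t • y) : False := by
  obtain ⟨hz, hzq⟩ :=
    F.lattice.smul_add_smul_mem_line_not_rel F.q_mem F.w_mem F.not_rel ha hb
  have hz0 : a • q + b • w ≠ 0 := F.lattice.ne_zero_of_not_mem_pSMul hz.2
  have hf : f (Projectivization.mk ℚ _ hz0) = a₂ :=
    F.apply_line _ hz0 ⟨1, one_ne_zero, by rwa [one_smul]⟩ hzq
  have hl' : ReducesIntoLine p B' q' w' (a • q + b • w) := h ▸
    F'.lattice.reducesIntoLine_smul_add_smul F'.q_mem.1 F'.w_mem.1 hx hy hxy (h ▸ hz0)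
  rcases (F'.reducesIntoLine_iff hz0).mp hl' with h' | h'
  · exact F.ne₁₂ (hswap ▸ h'.symm.trans hf)
  · exact F.ne₂₃ (hf.symm.trans (h'.trans h₃.symm))

theorem false_of_swap_of_pair [FiniteDimensional ℚ V] (hV : Module.finrank ℚ V ≤ 3)
    (hx0 : x ≠ 0) (hy0 : y ≠ 0) (hx : ReducesIntoLine p B' q' w' x)
    (hy : ReducesIntoLine p B' q' w' y) (hxy : ¬ ZpRelV p B' x y)
    (hxl : ¬ ReducesIntoLine p B q w x) (hyl : ¬ ReducesIntoLine p B q w y) : False := by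
  have hB := F.lattice
  obtain ⟨cx, hcx0, hX⟩ := hB.exists_smul_mem_diff hx0
  obtain ⟨cy, hcy0, hY⟩ := hB.exists_smul_mem_diff hy0
  have hXl : cx • x ∉ resLineV p B q w := fun h => hxl ⟨cx, hcx0, h, hX.2⟩
  have hYl : cy • y ∉ resLineV p B q w := fun h => hyl ⟨cy, hcy0, h, hY.2⟩
  obtain ⟨a, b, c, ha, hb, hc, hdecomp⟩ :=
    hB.exists_eq_smul_add_smul_add_smul hV F.q_mem F.w_mem F.not_rel hX.1 hXl hY.1 hYl
  -- `X₂ := cx • x + w` reduces off `l̄`, hence into `l̄' ∖ {q̄'}`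
  have hX₂l : cx • x + w ∉ resLineV p B q w := fun h =>
    hXl (by simpa using hB.add_mem_resLineV h (hB.smul_mem_resLineV
      ((zpLocal p).neg_mem (zpLocal p).one_mem) hB.right_mem_resLineV))
  have hX₂ : cx • x + w ∈ B \ pSMul p B :=
    ⟨hB.add_mem hX.1 F.w_mem.1, fun h => hX₂l (ZpLattice.pSMul_subset_resLineV h)⟩
  have hX₂0 := hB.ne_zero_of_not_mem_pSMul hX₂.2
  have hX₂' : ReducesIntoLine p B' q' w' (cx • x + w) :=
    ((F'.apply_eq_a₂_iff hX₂0).mp (hswap ▸ (F.apply_eq_a₁_iff hX₂0).mpr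
      (mt (hB.reducesIntoLine_iff_mem F.q_mem.1 F.w_mem.1 hX₂).mp hX₂l))).1
  by_cases hxX₂ : ZpRelV p B' x (cx • x + w)
  · have hX₂y : ¬ ZpRelV p B' (cx • x + w) y := fun h => hxy (hxX₂.trans F'.lattice h)
    rcases inPZp_or_isZpUnit hb with hpb | hub
    · refine F.false_of_swap_of_eq_smul_add_smul F' h₃ hswap hX₂' hy hX₂y ha
        (hc.neg.add_inPZp hpb) (s := -c) (t := cy) ?_
      rw [hdecomp]
      module
    · refine F.false_of_swap_of_eq_smul_add_smul F' h₃ hswap hx hy hxy ha hub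
        (s := -(c * cx)) (t := cy) ?_
      rw [hdecomp]
      module
  · refine F.false_of_swap_of_eq_smul_add_smul F' h₃ hswap hx hX₂' hxX₂ (zpLocal p).zero_mem
      isZpUnit_one (s := -cx) (t := 1) ?_
    module

theorem false_of_swap [FiniteDimensional ℚ V] (hV : Module.finrank ℚ V ≤ 3) : False := by
  have hB' := F'.lattice
  have hw0 := hB'.ne_zero_of_not_mem_pSMul F'.w_mem.2
  obtain ⟨hy, hyq⟩ := hB'.smul_add_smul_mem_line_not_rel F'.q_mem F'.w_mem F'.not_rel
    (zpLocal p).one_mem isZpUnit_one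
  have hy0 := hB'.ne_zero_of_not_mem_pSMul hy.2
  have hyl' : ReducesIntoLine p B' q' w' ((1 : ℚ) • q' + (1 : ℚ) • w') :=
    ⟨1, one_ne_zero, by rwa [one_smul]⟩
  have hwy : ¬ ZpRelV p B' w' ((1 : ℚ) • q' + (1 : ℚ) • w') := by
    rw [ZpRelV.iff_exists_isZpUnit hB' F'.w_mem
      ⟨hB'.resLineV_subset F'.q_mem.1 F'.w_mem.1 hy.1, hy.2⟩]
    rintro ⟨t, ht, h⟩
    refine ht.neg.not_inPZp (hB'.inPZp_of_smul_add_smul_mem_pSMul F'.q_mem F'.w_mem F'.not_rel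
      ((zpLocal p).neg_mem ht.mem_zpLocal) ((zpLocal p).sub_mem (zpLocal p).one_mem ht.mem_zpLocal)
      ?_).1
    convert h using 1
    module
  have hoff : ∀ z (hz0 : z ≠ 0), ReducesIntoLine p B' q' w' z → ¬ ZpRelV p B' z q' →
      ¬ ReducesIntoLine p B q w z := fun z hz0 hz hzq =>
    (F.apply_eq_a₁_iff hz0).mp (hswap ▸ (F'.apply_eq_a₂_iff hz0).mpr ⟨hz, hzq⟩)
  exact F.false_of_swap_of_pair F' h₃ hswap hV hw0 hy0 F'.reducesIntoLine_right hyl' hwy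
    (hoff _ hw0 F'.reducesIntoLine_right fun h => F'.not_rel (h.symm hB')) (hoff _ hy0 hyl' hyq)

omit hswap in
theorem a₂_eq [FiniteDimensional ℚ V] (hV : Module.finrank ℚ V ≤ 3) : a₂ = a₂' := by
  have hw0 := F'.lattice.ne_zero_of_not_mem_pSMul F'.w_mem.2
  have hf := F'.apply_right hw0
  rcases F.trichotomy hw0 with ⟨h, -⟩ | ⟨h, -⟩ | ⟨h, -⟩
  · exact (F.false_of_swap F' h₃ (hf.symm.trans h) hV).elim
  · exact h.symm.trans hf
  · exact (F'.ne₂₃ (hf.symm.trans (h.trans h₃))).elim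

end IsInducedFlag

section Scaling

variable {V : Type*} [AddCommGroup V] [Module ℚ V] {p : ℕ} {B : Set V} {a : ℚ} {x y : V}

theorem pSMul_smul_set (a : ℚ) (B : Set V) : pSMul p (a • B) = a • pSMul p B := by
  ext z
  simp only [pSMul, Set.mem_ofPred_eq, Set.mem_smul_set]
  constructor
  · rintro ⟨_, ⟨b, hb, rfl⟩, rfl⟩
    exact ⟨(p : ℚ) • b, ⟨b, hb, rfl⟩, smul_comm _ _ _⟩
  · rintro ⟨_, ⟨b, hb, rfl⟩, rfl⟩
    exact ⟨a • b, ⟨b, hb, rfl⟩, smul_comm _ _ _⟩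

theorem ZpRelV.of_smul_set (ha : a ≠ 0) (h : ZpRelV p (a • B) x y) : ZpRelV p B x y := by
  obtain ⟨_, _, ⟨α, hα, rfl⟩, ⟨β, hβ, rfl⟩, h1, h2, h3, h4, h5⟩ := h
  rw [pSMul_smul_set] at h2 h4 h5
  rw [Set.mem_smul_set_iff_inv_smul_mem₀ ha] at h1 h2 h3 h4 h5
  refine ZpRelV.intro (mul_ne_zero (inv_ne_zero ha) hα) (mul_ne_zero (inv_ne_zero ha) hβ)
    (by rw [mul_smul]; exact ⟨h1, h2⟩) (by rw [mul_smul]; exact ⟨h3, h4⟩) ?_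
  rwa [mul_smul, mul_smul, ← smul_sub]

theorem ZpRelV.smul_set_iff (ha : a ≠ 0) : ZpRelV p (a • B) x y ↔ ZpRelV p B x y :=
  ⟨of_smul_set ha, fun h => of_smul_set (inv_ne_zero ha) (by rwa [inv_smul_smul₀ ha])⟩

variable [Fact p.Prime]

theorem ZpLattice.smul_set (hB : ZpLattice p B) (ha : a ≠ 0) : ZpLattice p (a • B) where
  zero_mem := ⟨0, hB.zero_mem, smul_zero a⟩
  add_mem hx hy := by
    rw [Set.mem_smul_set_iff_inv_smul_mem₀ ha] at hx hy ⊢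
    rw [smul_add]
    exact hB.add_mem hx hy
  smul_mem hc hx := by
    rw [Set.mem_smul_set_iff_inv_smul_mem₀ ha] at hx ⊢
    rw [smul_comm]
    exact hB.smul_mem hc hx
  span_eq_top := by rw [Submodule.span_smul_eq_of_isUnit _ _ (IsUnit.mk0 a ha), hB.span_eq_top]
  bddBelow x hx := by
    obtain ⟨M, hM⟩ := hB.bddBelow (a⁻¹ • x) (smul_ne_zero (inv_ne_zero ha) hx)
    refine ⟨M, fun m hm => hM ?_⟩
    rw [Set.mem_ofPred_eq, Set.mem_smul_set_iff_inv_smul_mem₀ ha, smul_comm] at hm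
    exact hm

theorem ZpLattice.exists_zpow_smul_set_subset (hB : ZpLattice p B) (s : Finset V) :
    ∃ m : ℤ, (p : ℚ) ^ m • zpSpanV p s ⊆ B := by
  choose m hm using hB.exists_zpow_smul_mem
  obtain ⟨M, hM⟩ := (s.image m).exists_le
  refine ⟨M, Set.smul_set_subset_iff.mpr ?_⟩
  rintro _ ⟨f, hf, rfl⟩
  rw [Finset.smul_sum]
  refine hB.sum_mem s fun t ht => ?_
  rw [smul_comm]
  exact hB.smul_mem (hf t) (hB.zpow_smul_mem_of_le (hm t) (hM _ (Finset.mem_image_of_mem m ht)))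

end Scaling

namespace ZpLattice

variable {V : Type*} [AddCommGroup V] [Module ℚ V] {p : ℕ} [Fact p.Prime] {B B' C : Set V}
  {q q' qc : V}

/-- If `qc ∈ pB`, take any `v ∈ C ∖ pB` and the primitive multiple `z = c • qc` in `B`: since
`c⁻¹ • v ∈ pC`, the vector `z + v` reduces to `q̄c` for `C`, hence to `z̄` for `B`, so `v̄ ∝ z̄`. -/
theorem exists_rel_not_mem_pSMul (hB : ZpLattice p B) (hC : ZpLattice p C) (hCB : C ⊆ B)
    (hCpB : ¬ C ⊆ pSMul p B) (hqc : qc ∈ C \ pSMul p C)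
    (h : ∀ x : V, x ≠ 0 → (ZpRelV p B x q ↔ ZpRelV p C x qc)) :
    ∃ y ∈ C, y ∉ pSMul p B ∧ ZpRelV p C y qc := by
  have hqc0 := hC.ne_zero_of_not_mem_pSMul hqc.2
  by_cases hqcB : qc ∈ pSMul p B
  swap
  · exact ⟨qc, hqc.1, hqcB, ZpRelV.refl hC hqc0⟩
  obtain ⟨v, hvC, hvB⟩ := Set.not_subset.mp hCpB
  refine ⟨v, hvC, hvB, ?_⟩
  obtain ⟨c, hc0, hz⟩ := hB.exists_smul_mem_diff hqc0
  have hpc : InPZp p c⁻¹ :=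
    hB.inPZp_of_smul_mem_pSMul hz (by rwa [smul_smul, inv_mul_cancel₀ hc0, one_smul])
  have hv : v ∈ B \ pSMul p B := ⟨hCB hvC, hvB⟩
  have hpv : c⁻¹ • v ∈ pSMul p C := hC.smul_mem_pSMul_of_inPZp hpc hvC
  have hzvC : ZpRelV p C (c • qc + v) qc := by
    rw [← ZpRelV.smul_left_iff (inv_ne_zero hc0), smul_add, inv_smul_smul₀ hc0]
    refine ZpRelV.of_sub_mem ⟨hC.add_mem hqc.1 (hC.pSMul_subset hpv), fun h' => hqc.2 ?_⟩ hqc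
      (by simpa using hpv)
    simpa using hC.sub_mem_pSMul h' hpv
  have hzq : ZpRelV p B (c • qc) q :=
    (h _ (smul_ne_zero hc0 hqc0)).mpr ((ZpRelV.refl hC hqc0).smul_left hc0)
  have hzv0 : c • qc + v ≠ 0 := fun h0 => hqc.2 <| by
    have := hC.smul_mem_pSMul (intCast_mem _ (-1)) hpv
    rwa [eq_neg_of_add_eq_zero_right h0, Int.cast_neg, Int.cast_one, neg_one_smul, smul_neg,
      neg_neg, inv_smul_smul₀ hc0] at this
  have hvz : ZpRelV p B v (c • qc) :=
    ZpRelV.of_add_left hB hz hv (((h _ hzv0).mpr hzvC).trans hB (hzq.symm hB))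
  exact (h v (hB.ne_zero_of_not_mem_pSMul hvB)).mp (hvz.trans hB hzq)

/-- For `u ∈ B`, the vector `y + p • u` lies in the residue disc of `y ∈ C ∖ pB`; comparing a
`C`-primitive multiple of it with `y` modulo `pC` forces `u ∈ C`. -/
theorem subset_of_rel_iff (hB : ZpLattice p B) (hC : ZpLattice p C) (hCB : C ⊆ B)
    (hCpB : ¬ C ⊆ pSMul p B) (hqc : qc ∈ C \ pSMul p C)
    (h : ∀ x : V, x ≠ 0 → (ZpRelV p B x q ↔ ZpRelV p C x qc)) : B ⊆ C := by
  obtain ⟨y, hyC, hyB, hyqc⟩ := hB.exists_rel_not_mem_pSMul hC hCB hCpB hqc h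
  have hy : y ∈ B \ pSMul p B := ⟨hCB hyC, hyB⟩
  have hyq : ZpRelV p B y q := (h y (hB.ne_zero_of_not_mem_pSMul hyB)).mpr hyqc
  intro u hu
  have hpu : (p : ℚ) • u ∈ pSMul p B := ⟨u, hu, rfl⟩
  have hx : y + (p : ℚ) • u ∈ B \ pSMul p B :=
    ⟨hB.add_mem hy.1 (hB.pSMul_subset hpu), fun h' => hyB (by simpa using hB.sub_mem_pSMul h' hpu)⟩
  have hxy : ZpRelV p B (y + (p : ℚ) • u) y := ZpRelV.of_sub_mem hx hy (by simpa using hpu)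
  have hxyC : ZpRelV p C (y + (p : ℚ) • u) y :=
    ((h _ (hB.ne_zero_of_not_mem_pSMul hx.2)).mp (hxy.trans hB hyq)).trans hC (hyqc.symm hC)
  obtain ⟨_, _, ⟨β, -, rfl⟩, ⟨γ, -, rfl⟩, h1, -, h3, h4, h5⟩ := hxyC
  have hβ : β ∈ zpLocal p := hB.mem_zpLocal_of_smul_mem hx (hCB h1)
  have hγ : IsZpUnit p γ :=
    hC.isZpUnit_of_smul_mem ⟨hyC, fun h' => hyB (pSMul_mono hCB h')⟩ ⟨h3, h4⟩
  have hβγ : InPZp p (β - γ) := by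
    refine hB.inPZp_of_smul_mem_pSMul hy ?_
    convert hB.sub_mem_pSMul (pSMul_mono hCB h5) ⟨β • u, hB.smul_mem hβ hu, rfl⟩ using 1
    module
  have hpβu : (p : ℚ) • (β • u) ∈ pSMul p C := by
    convert hC.sub_mem_pSMul h5 (hC.smul_mem_pSMul_of_inPZp hβγ hyC) using 1
    module
  have hβu : β • u ∈ C := by
    simpa only [inv_smul_smul₀ prime_cast_ne_zero] using inv_smul_mem_of_mem_pSMul hpβu
  by_contra hu'
  exact hu' ((hC.smul_mem_iff_of_isZpUnit (by simpa using hγ.add_inPZp hβγ)).mp hβu)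


/-- Scale `B'` by the least power of `p` that brings it into `B`; the result is not inside `pB`. -/
theorem exists_smul_set_eq_of_rel_iff (hB : ZpLattice p B) (hB' : ZpLattice p B')
    (hfg : ∃ s : Finset V, B' = zpSpanV p s) (hq' : q' ∈ B' \ pSMul p B')
    (h : ∀ x : V, x ≠ 0 → (ZpRelV p B x q ↔ ZpRelV p B' x q')) :
    ∃ a : ℚ, a ≠ 0 ∧ B' = a • B := by
  obtain ⟨s, rfl⟩ := hfg
  obtain ⟨M, hM⟩ := hB.bddBelow q' (hB'.ne_zero_of_not_mem_pSMul hq'.2)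
  obtain ⟨m, hm, hleast⟩ := Int.exists_least_of_bdd
    (P := fun m : ℤ => (p : ℚ) ^ m • zpSpanV p s ⊆ B)
    ⟨M, fun m hm => hM (hm (Set.smul_mem_smul_set hq'.1))⟩ (hB.exists_zpow_smul_set_subset s)
  have hpm : (p : ℚ) ^ m ≠ 0 := zpow_ne_zero _ prime_cast_ne_zero
  have hCpB : ¬ (p : ℚ) ^ m • zpSpanV p s ⊆ pSMul p B := fun hsub => by
    have := hleast (m - 1) <| by
      rw [zpow_sub_one₀ prime_cast_ne_zero, mul_comm, mul_smul]
      exact Set.smul_set_subset_iff.mpr fun z hz => inv_smul_mem_of_mem_pSMul (hsub hz)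
    omega
  have hqc :
      (p : ℚ) ^ m • q' ∈ (p : ℚ) ^ m • zpSpanV p s \ pSMul p ((p : ℚ) ^ m • zpSpanV p s) := by
    rw [pSMul_smul_set, ← Set.smul_set_sdiff₀ hpm]
    exact Set.smul_mem_smul_set hq'
  have hBC := hB.subset_of_rel_iff (hB'.smul_set hpm) hm hCpB hqc fun x hx => by
    rw [ZpRelV.smul_set_iff hpm, ZpRelV.smul_right_iff hB' hpm]
    exact h x hx
  exact ⟨((p : ℚ) ^ m)⁻¹, inv_ne_zero hpm, by rw [← hm.antisymm hBC, inv_smul_smul₀ hpm]⟩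

end ZpLattice

theorem stmt11_general (p : ℕ) (hp : p.Prime) (A : Type w)
    (f : Projectivization ℚ (Fin 3 → ℚ) → A)
    (B B' : Set (Fin 3 → ℚ)) (hB : IsZpLatIn p ⊤ B) (hB' : IsZpLatIn p ⊤ B')
    -- the flag `q̄ ∈ l̄ = line(q̄,w̄)` of `ℙ(B/pB)` and the values of `f̄`:
    (q w : Fin 3 → ℚ) (hq : q ∈ B \ pSMul p B) (hw : w ∈ B \ pSMul p B)
    (hqw : ¬ ZpRelV p B q w)
    (a₁ a₂ a₃ : A) (h12 : a₁ ≠ a₂) (h13 : a₁ ≠ a₃) (h23 : a₂ ≠ a₃)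
    (hoff : ∀ x : Fin 3 → ℚ, ∀ hx : x ≠ 0,
      (∃ a : ℚ, a ≠ 0 ∧ a • x ∈ (B \ pSMul p B) ∧ a • x ∉ resLineV p B q w) →
      f (Projectivization.mk ℚ x hx) = a₁)
    (hlin : ∀ x : Fin 3 → ℚ, ∀ hx : x ≠ 0,
      (∃ a : ℚ, a ≠ 0 ∧ a • x ∈ resLineV p B q w \ pSMul p B) → ¬ ZpRelV p B x q →
      f (Projectivization.mk ℚ x hx) = a₂)
    (hpt : ∀ x : Fin 3 → ℚ, ∀ hx : x ≠ 0, ZpRelV p B x q →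
      f (Projectivization.mk ℚ x hx) = a₃)
    -- the flag `q̄' ∈ l̄' = line(q̄',w̄')` of `ℙ(B'/pB')` and the values of `f̄'`:
    (q' w' : Fin 3 → ℚ) (hq' : q' ∈ B' \ pSMul p B') (hw' : w' ∈ B' \ pSMul p B')
    (hqw' : ¬ ZpRelV p B' q' w')
    (a₁' a₂' a₃' : A) (h12' : a₁' ≠ a₂') (h13' : a₁' ≠ a₃') (h23' : a₂' ≠ a₃')
    (hoff' : ∀ x : Fin 3 → ℚ, ∀ hx : x ≠ 0,
      (∃ a : ℚ, a ≠ 0 ∧ a • x ∈ (B' \ pSMul p B') ∧ a • x ∉ resLineV p B' q' w') →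
      f (Projectivization.mk ℚ x hx) = a₁')
    (hlin' : ∀ x : Fin 3 → ℚ, ∀ hx : x ≠ 0,
      (∃ a : ℚ, a ≠ 0 ∧ a • x ∈ resLineV p B' q' w' \ pSMul p B') → ¬ ZpRelV p B' x q' →
      f (Projectivization.mk ℚ x hx) = a₂')
    (hpt' : ∀ x : Fin 3 → ℚ, ∀ hx : x ≠ 0, ZpRelV p B' x q' →
      f (Projectivization.mk ℚ x hx) = a₃')
    -- `f̄(q̄) = f̄'(q̄')`:
    (hval : a₃ = a₃') :
    ∃ a : ℚ, a ≠ 0 ∧ B' = (fun t => a • t) '' B ∧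
      (∀ x : Fin 3 → ℚ, x ≠ 0 → (ZpRelV p B x q ↔ ZpRelV p B' x q')) ∧
      (∀ x : Fin 3 → ℚ, x ≠ 0 →
        ((∃ c : ℚ, c ≠ 0 ∧ c • x ∈ resLineV p B q w \ pSMul p B) ↔
         (∃ c : ℚ, c ≠ 0 ∧ c • x ∈ resLineV p B' q' w' \ pSMul p B'))) := by
  have : Fact p.Prime := ⟨hp⟩
  have F : IsInducedFlag f p B q w a₁ a₂ a₃ :=
    ⟨hB.zpLattice, hq, hw, hqw, hoff, hlin, hpt, h12, h13, h23⟩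
  have F' : IsInducedFlag f p B' q' w' a₁' a₂' a₃' :=
    ⟨hB'.zpLattice, hq', hw', hqw', hoff', hlin', hpt', h12', h13', h23'⟩
  have hdisc : ∀ x : Fin 3 → ℚ, x ≠ 0 → (ZpRelV p B x q ↔ ZpRelV p B' x q') := fun x hx => by
    rw [← F.apply_eq_a₃_iff hx, ← F'.apply_eq_a₃_iff hx, hval]
  have ha₂ : a₂ = a₂' := F.a₂_eq F' hval (by simp)
  obtain ⟨a, ha, hBB'⟩ := F.lattice.exists_smul_set_eq_of_rel_iff F'.lattice hB'.1 hq' hdisc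
  refine ⟨a, ha, hBB', hdisc, fun x hx => ?_⟩
  rw [← ReducesIntoLine, ← ReducesIntoLine, F.reducesIntoLine_iff hx, F'.reducesIntoLine_iff hx,
    ha₂, hval]

/-- Corollary 3.6: under the hypotheses of Statement 10,
suppose `f` is induced via the lattices `B` and `B'` from flag maps `f̄`, `f̄'`
with three pairwise distinct values, with flags `q̄ ∈ l̄ = line(q̄,w̄)` and
`q̄' ∈ l̄' = line(q̄',w̄')`.  If `f̄(q̄) = f̄'(q̄')`, then `B' = a·B` for some
`a ∈ ℚ^×`, and `f̄ = f̄'` under the induced identification of `ℙ(B/pB)` with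
`ℙ(B'/pB')`: the flags (hence the three level sets of the two flag maps)
correspond to each other. -/
theorem stmt11 (p : ℕ) (hp : p.Prime) (A : Type w)
    (f : Projectivization ℚ (Fin 3 → ℚ) → A)
    (h3 : ∃ a₁ a₂ a₃ : A, a₁ ≠ a₂ ∧ a₁ ≠ a₃ ∧ a₂ ≠ a₃ ∧
      Set.range f = {a₁, a₂, a₃})
    (h2 : ∀ W : Submodule ℚ (Fin 3 → ℚ), Module.finrank ℚ W = 2 →
      ∀ x ∈ psub W, ∀ y ∈ psub W, ∀ z ∈ psub W, f x = f y ∨ f x = f z ∨ f y = f z)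
    (hlines : ∀ W : Submodule ℚ (Fin 3 → ℚ), Module.finrank ℚ W = 2 →
      ∃ B : Set (Fin 3 → ℚ), IsZpLatIn p W B ∧ InducedOn f W p B ∧
        ∃ q : Fin 3 → ℚ, q ∈ B \ pSMul p B ∧
          ∀ x y : Fin 3 → ℚ, ∀ (hx : x ≠ 0) (hy : y ≠ 0), x ∈ W → y ∈ W →
            ¬ ZpRelV p B x q → ¬ ZpRelV p B y q →
            f (Projectivization.mk ℚ x hx) = f (Projectivization.mk ℚ y hy))
    (B B' : Set (Fin 3 → ℚ)) (hB : IsZpLatIn p ⊤ B) (hB' : IsZpLatIn p ⊤ B')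
    -- the flag `q̄ ∈ l̄ = line(q̄,w̄)` of `ℙ(B/pB)` and the values of `f̄`:
    (q w : Fin 3 → ℚ) (hq : q ∈ B \ pSMul p B) (hw : w ∈ B \ pSMul p B)
    (hqw : ¬ ZpRelV p B q w)
    (a₁ a₂ a₃ : A) (h12 : a₁ ≠ a₂) (h13 : a₁ ≠ a₃) (h23 : a₂ ≠ a₃)
    (hoff : ∀ x : Fin 3 → ℚ, ∀ hx : x ≠ 0,
      (∃ a : ℚ, a ≠ 0 ∧ a • x ∈ (B \ pSMul p B) ∧ a • x ∉ resLineV p B q w) →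
      f (Projectivization.mk ℚ x hx) = a₁)
    (hlin : ∀ x : Fin 3 → ℚ, ∀ hx : x ≠ 0,
      (∃ a : ℚ, a ≠ 0 ∧ a • x ∈ resLineV p B q w \ pSMul p B) → ¬ ZpRelV p B x q →
      f (Projectivization.mk ℚ x hx) = a₂)
    (hpt : ∀ x : Fin 3 → ℚ, ∀ hx : x ≠ 0, ZpRelV p B x q →
      f (Projectivization.mk ℚ x hx) = a₃)
    -- the flag `q̄' ∈ l̄' = line(q̄',w̄')` of `ℙ(B'/pB')` and the values of `f̄'`:
    (q' w' : Fin 3 → ℚ) (hq' : q' ∈ B' \ pSMul p B') (hw' : w' ∈ B' \ pSMul p B')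
    (hqw' : ¬ ZpRelV p B' q' w')
    (a₁' a₂' a₃' : A) (h12' : a₁' ≠ a₂') (h13' : a₁' ≠ a₃') (h23' : a₂' ≠ a₃')
    (hoff' : ∀ x : Fin 3 → ℚ, ∀ hx : x ≠ 0,
      (∃ a : ℚ, a ≠ 0 ∧ a • x ∈ (B' \ pSMul p B') ∧ a • x ∉ resLineV p B' q' w') →
      f (Projectivization.mk ℚ x hx) = a₁')
    (hlin' : ∀ x : Fin 3 → ℚ, ∀ hx : x ≠ 0,
      (∃ a : ℚ, a ≠ 0 ∧ a • x ∈ resLineV p B' q' w' \ pSMul p B') → ¬ ZpRelV p B' x q' →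
      f (Projectivization.mk ℚ x hx) = a₂')
    (hpt' : ∀ x : Fin 3 → ℚ, ∀ hx : x ≠ 0, ZpRelV p B' x q' →
      f (Projectivization.mk ℚ x hx) = a₃')
    -- `f̄(q̄) = f̄'(q̄')`:
    (hval : a₃ = a₃') :
    ∃ a : ℚ, a ≠ 0 ∧ B' = (fun t => a • t) '' B ∧
      (∀ x : Fin 3 → ℚ, x ≠ 0 → (ZpRelV p B x q ↔ ZpRelV p B' x q')) ∧
      (∀ x : Fin 3 → ℚ, x ≠ 0 →
        ((∃ c : ℚ, c ≠ 0 ∧ c • x ∈ resLineV p B q w \ pSMul p B) ↔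
         (∃ c : ℚ, c ≠ 0 ∧ c • x ∈ resLineV p B' q' w' \ pSMul p B'))) :=
  stmt11_general p hp A f B B' hB hB' q w hq hw hqw a₁ a₂ a₃ h12 h13 h23 hoff hlin hpt q' w' hq' hw'
    hqw' a₁' a₂' a₃' h12' h13' h23' hoff' hlin' hpt' hval
end
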